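/- arXiv:1703.01680 — 7 statements merged into one kernel-verified Lean document; each statement's English description precedes it below -/
import Mathlib

section
/- Let X be a compact metric space and let l : Y × Λ × X → ℝ be continuous, where Y and Λ are compact metric spaces. Then the function L* : P(X) → ℝ defined on the space of Borel probability measures on X (with the topology of weak convergence) by L*(Q) = inf_{y ∈ Y} sup_{λ ∈ Λ} E_Q[l(y, λ, x)] is continuous. -/
/-!
The expectation `∫ f dQ` is jointly continuous in `(Q, f)`: it is continuous in `Q` by definition
of weak convergence and `1`-Lipschitz in `f` for the sup norm. Since `X` is compact,
`(y, λ) ↦ l y λ ·` is continuous into `X →ᵇ ℝ`, so `(Q, y, λ) ↦ E_Q[l y λ ·]` is jointly continuous.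
Taking a supremum, and then an infimum, over a compact factor preserves joint continuity.
-/

open MeasureTheory Filter Topology BoundedContinuousFunction

section CompactSupInf

variable {α β γ : Type*} [ConditionallyCompleteLinearOrder α] [TopologicalSpace α]
  [OrderTopology α] [TopologicalSpace β] [CompactSpace β] [TopologicalSpace γ]

theorem continuous_iSup_of_compactSpace {f : γ → β → α} (hf : Continuous ↿f) :
    Continuous fun x => ⨆ b, f x b := by
  simpa only [Set.image_univ, sSup_range] using isCompact_univ.continuous_sSup hf

theorem continuous_iInf_of_compactSpace {f : γ → β → α} (hf : Continuous ↿f) :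
    Continuous fun x => ⨅ b, f x b :=
  continuous_iSup_of_compactSpace (α := αᵒᵈ) hf

end CompactSupInf

namespace MeasureTheory.ProbabilityMeasure

variable {X : Type*} [TopologicalSpace X] [MeasurableSpace X] [OpensMeasurableSpace X]

theorem lipschitzWith_one_integral_boundedContinuousFunction (Q : ProbabilityMeasure X) :
    LipschitzWith 1 fun f : X →ᵇ ℝ => ∫ x, f x ∂(Q : Measure X) := by
  refine LipschitzWith.of_dist_le_mul fun f g => ?_
  rw [NNReal.coe_one, one_mul, dist_eq_norm, dist_eq_norm,
    ← integral_sub (f.integrable _) (g.integrable _)]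
  exact (f - g).norm_integral_le_norm _

theorem continuous_integral_prod_boundedContinuousFunction :
    Continuous fun p : ProbabilityMeasure X × (X →ᵇ ℝ) => ∫ x, p.2 x ∂(p.1 : Measure X) :=
  continuous_prod_of_continuous_lipschitzWith' _ 1
    lipschitzWith_one_integral_boundedContinuousFunction
    continuous_integral_boundedContinuousFunction

end MeasureTheory.ProbabilityMeasure

theorem ContinuousMap.continuous_curry_boundedOfCompact {P X : Type*} [TopologicalSpace P]
    [TopologicalSpace X] [CompactSpace X] (k : C(P × X, ℝ)) :
    Continuous fun p => isometryEquivBoundedOfCompact X ℝ (k.curry p) :=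
  (isometryEquivBoundedOfCompact X ℝ).continuous.comp k.curry.continuous

theorem stmt0_general {X Y Λ : Type*}
    [MetricSpace X] [CompactSpace X] [MeasurableSpace X] [BorelSpace X]
    [MetricSpace Y] [CompactSpace Y]
    [MetricSpace Λ] [CompactSpace Λ]
    (l : Y → Λ → X → ℝ)
    (hl : Continuous fun p : Y × Λ × X => l p.1 p.2.1 p.2.2) :
    Continuous fun Q : ProbabilityMeasure X =>
      ⨅ y : Y, ⨆ lam : Λ, ∫ x, l y lam x ∂(Q : Measure X) := by
  let k : C((Y × Λ) × X, ℝ) := ⟨fun q => l q.1.1 q.1.2 q.2, by fun_prop⟩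
  have hexp : Continuous fun q : (ProbabilityMeasure X × Y) × Λ =>
      ∫ x, l q.1.2 q.2 x ∂(q.1.1 : Measure X) :=
    ProbabilityMeasure.continuous_integral_prod_boundedContinuousFunction.comp
      (.prodMk (continuous_fst.comp continuous_fst)
        (k.continuous_curry_boundedOfCompact.comp
          (.prodMk (continuous_snd.comp continuous_fst) continuous_snd)))
  exact continuous_iInf_of_compactSpace (f := fun Q y => _)
    (continuous_iSup_of_compactSpace (f := fun q lam => _) hexp)

/-- Continuity of `Q ↦ inf_y sup_λ E_Q[l(y,λ,x)]` on the space of Borel probability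
measures with the weak-convergence topology, for continuous `l` on compact spaces. -/
theorem stmt0 {X Y Λ : Type*}
    [MetricSpace X] [CompactSpace X] [MeasurableSpace X] [BorelSpace X]
    [MetricSpace Y] [CompactSpace Y] [Nonempty Y]
    [MetricSpace Λ] [CompactSpace Λ] [Nonempty Λ]
    (l : Y → Λ → X → ℝ)
    (hl : Continuous fun p : Y × Λ × X => l p.1 p.2.1 p.2.2) :
    Continuous fun Q : ProbabilityMeasure X =>
      ⨅ y : Y, ⨆ lam : Λ, ∫ x, l y lam x ∂(Q : Measure X) :=
  stmt0_general l hl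
end

section
/- Let Q_n → Q∞ weakly in P(X), and let (u_n, v_n) be the unique saddle point of the strictly convex–concave regularized functional L_n(y, λ, Q_n) = E_{Q_n}[l(y, λ, x)] + (‖y‖² − λ²)/n. Then L_n(u_n, v_n, Q_n) → L(u∞, v∞, Q∞) as n → ∞, where (u∞, v∞) is any saddle point of L(·, ·, Q∞). -/
/-!
Along any subsequence, compactness of `Y × Λ` extracts a further subsequence on which
`(u_n, v_n) → (u, v)`. The regularized functionals converge continuously to `L(·, ·, Q∞)`
(weak convergence of `Q_n`, uniform continuity of `l` on the compact `X`, and the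
regularizer is `O(1/n)`), so passing to the limit in the saddle inequalities shows that
`(u, v)` is a saddle point of `L(·, ·, Q∞)`. All saddle points of a function share the same
value, hence the regularized values converge to `L(u∞, v∞, Q∞)` along the subsequence, and
therefore along the whole sequence.
-/

open MeasureTheory Filter Topology BoundedContinuousFunction

namespace IsSaddlePointOn

variable {E F β : Type*} {X : Set E} {Y : Set F} {f : E → F → β} {a a' : E} {b b' : F}

theorem of_forall_le_and_le [Preorder β]
    (h : ∀ x ∈ X, ∀ y ∈ Y, f a y ≤ f a b ∧ f a b ≤ f x b) : IsSaddlePointOn X Y f a b :=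
  fun x hx y hy => (h x hx y hy).1.trans (h x hx y hy).2

theorem value_eq [PartialOrder β] (h : IsSaddlePointOn X Y f a b)
    (h' : IsSaddlePointOn X Y f a' b') (ha : a ∈ X) (hb : b ∈ Y) (ha' : a' ∈ X)
    (hb' : b' ∈ Y) : f a b = f a' b' :=
  le_antisymm ((h a' ha' b hb).trans (h' a' ha' b hb))
    ((h' a ha b' hb').trans (h a ha b' hb'))

theorem of_tendsto [TopologicalSpace E] [TopologicalSpace F] [TopologicalSpace β] [Preorder β]
    [OrderClosedTopology β] {ι : Type*} {L : Filter ι} [L.NeBot] {fs : ι → E → F → β}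
    {as : ι → E} {bs : ι → F} (hsad : ∀ᶠ i in L, IsSaddlePointOn X Y (fs i) (as i) (bs i))
    (has : Tendsto as L (𝓝 a)) (hbs : Tendsto bs L (𝓝 b))
    (hfs : ∀ {xs : ι → E} {ys : ι → F} {x : E} {y : F}, Tendsto xs L (𝓝 x) →
      Tendsto ys L (𝓝 y) → Tendsto (fun i => fs i (xs i) (ys i)) L (𝓝 (f x y))) :
    IsSaddlePointOn X Y f a b := fun x hx y hy =>
  le_of_tendsto_of_tendsto (hfs has tendsto_const_nhds) (hfs tendsto_const_nhds hbs)
    (hsad.mono fun _ hi => hi x hx y hy)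

end IsSaddlePointOn

namespace MeasureTheory.ProbabilityMeasure

variable {X : Type*} [TopologicalSpace X] [MeasurableSpace X] [OpensMeasurableSpace X]
  {ι : Type*} {L : Filter ι} {μs : ι → ProbabilityMeasure X} {μ : ProbabilityMeasure X}

theorem tendsto_integral_of_tendsto_of_tendsto (hμ : Tendsto μs L (𝓝 μ))
    {fs : ι → X →ᵇ ℝ} {f : X →ᵇ ℝ} (hf : Tendsto fs L (𝓝 f)) :
    Tendsto (fun i => ∫ x, fs i x ∂(μs i : Measure X)) L (𝓝 (∫ x, f x ∂(μ : Measure X))) := by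
  have hdiff : Tendsto (fun i => ∫ x, (fs i - f) x ∂(μs i : Measure X)) L (𝓝 0) :=
    squeeze_zero_norm (fun i => norm_integral_le_norm _ _)
      (tendsto_iff_norm_sub_tendsto_zero.mp hf)
  convert hdiff.add (tendsto_iff_forall_integral_tendsto.mp hμ f) using 2 with i
  · rw [coe_sub, Pi.sub_def, integral_sub ((fs i).integrable _) (f.integrable _),
      sub_add_cancel]
  · rw [zero_add]

theorem tendsto_integral_of_continuous_uncurry [CompactSpace X] {P : Type*}
    [TopologicalSpace P] {f : P → X → ℝ} (hf : Continuous (Function.uncurry f))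
    (hμ : Tendsto μs L (𝓝 μ)) {ps : ι → P} {p : P} (hp : Tendsto ps L (𝓝 p)) :
    Tendsto (fun i => ∫ x, f (ps i) x ∂(μs i : Measure X)) L
      (𝓝 (∫ x, f p x ∂(μ : Measure X))) := by
  let fb : P → X →ᵇ ℝ :=
    ContinuousMap.isometryEquivBoundedOfCompact X ℝ ∘ (ContinuousMap.curry ⟨_, hf⟩)
  have hfb : Continuous fb :=
    (ContinuousMap.isometryEquivBoundedOfCompact X ℝ).continuous.comp
      (ContinuousMap.curry ⟨_, hf⟩).continuous
  exact tendsto_integral_of_tendsto_of_tendsto hμ ((hfb.tendsto p).comp hp)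

end MeasureTheory.ProbabilityMeasure

section Loss

variable {E X : Type*} [NormedAddCommGroup E] [MeasurableSpace X]

noncomputable def expectedLoss (l : E → ℝ → X → ℝ) (μ : ProbabilityMeasure X) (y : E)
    (lam : ℝ) : ℝ :=
  ∫ x, l y lam x ∂(μ : Measure X)

noncomputable def regularizedLoss (l : E → ℝ → X → ℝ) (μ : ProbabilityMeasure X) (n : ℕ)
    (y : E) (lam : ℝ) : ℝ :=
  expectedLoss l μ y lam + (‖y‖ ^ 2 - lam ^ 2) / n

theorem tendsto_regularizedLoss [TopologicalSpace X] [OpensMeasurableSpace X] [CompactSpace X]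
    {l : E → ℝ → X → ℝ} (hl : Continuous fun p : E × ℝ × X => l p.1 p.2.1 p.2.2)
    {ι : Type*} {L : Filter ι} {ns : ι → ℕ} (hns : Tendsto ns L atTop)
    {μs : ι → ProbabilityMeasure X} {μ : ProbabilityMeasure X} (hμ : Tendsto μs L (𝓝 μ))
    {ys : ι → E} {lams : ι → ℝ} {y : E} {lam : ℝ} (hy : Tendsto ys L (𝓝 y))
    (hlam : Tendsto lams L (𝓝 lam)) :
    Tendsto (fun i => regularizedLoss l (μs i) (ns i) (ys i) (lams i)) L
      (𝓝 (expectedLoss l μ y lam)) := by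
  have hexp : Tendsto (fun i => expectedLoss l (μs i) (ys i) (lams i)) L
      (𝓝 (expectedLoss l μ y lam)) :=
    ProbabilityMeasure.tendsto_integral_of_continuous_uncurry
      (f := fun (p : E × ℝ) x => l p.1 p.2 x)
      (hl.comp (by fun_prop : Continuous fun q : (E × ℝ) × X => (q.1.1, q.1.2, q.2)) :)
      hμ (hy.prodMk_nhds hlam)
  have hreg : Tendsto (fun i => (‖ys i‖ ^ 2 - lams i ^ 2) / (ns i : ℝ)) L (𝓝 0) :=
    ((hy.norm.pow 2).sub (hlam.pow 2)).div_atTop (tendsto_natCast_atTop_atTop.comp hns)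
  rw [← add_zero (expectedLoss l μ y lam)]
  exact hexp.add hreg

end Loss

theorem stmt5_general {m : ℕ} {X : Type*}
    [MetricSpace X] [CompactSpace X] [MeasurableSpace X] [BorelSpace X]
    (Y : Set (EuclideanSpace ℝ (Fin m))) (hYc : IsCompact Y)
    (Λ : Set ℝ) (hΛc : IsCompact Λ)
    (l : EuclideanSpace ℝ (Fin m) → ℝ → X → ℝ)
    (hl : Continuous fun p : EuclideanSpace ℝ (Fin m) × ℝ × X => l p.1 p.2.1 p.2.2)
    (Q : ℕ → ProbabilityMeasure X) (Qinf : ProbabilityMeasure X)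
    (hQ : Tendsto Q atTop (𝓝 Qinf))
    (u : ℕ → EuclideanSpace ℝ (Fin m)) (v : ℕ → ℝ)
    (hu : ∀ n, u n ∈ Y) (hv : ∀ n, v n ∈ Λ)
    (hsaddle : ∀ n : ℕ, 1 ≤ n → ∀ y ∈ Y, ∀ lam ∈ Λ,
      ((∫ x, l (u n) lam x ∂(Q n : Measure X)) + (‖u n‖ ^ 2 - lam ^ 2) / n
          ≤ (∫ x, l (u n) (v n) x ∂(Q n : Measure X)) + (‖u n‖ ^ 2 - v n ^ 2) / n) ∧
        ((∫ x, l (u n) (v n) x ∂(Q n : Measure X)) + (‖u n‖ ^ 2 - v n ^ 2) / n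
          ≤ (∫ x, l y (v n) x ∂(Q n : Measure X)) + (‖y‖ ^ 2 - v n ^ 2) / n))
    (uinf : EuclideanSpace ℝ (Fin m)) (vinf : ℝ) (huinf : uinf ∈ Y) (hvinf : vinf ∈ Λ)
    (hsaddleinf : ∀ y ∈ Y, ∀ lam ∈ Λ,
      (∫ x, l uinf lam x ∂(Qinf : Measure X)) ≤ (∫ x, l uinf vinf x ∂(Qinf : Measure X)) ∧
        (∫ x, l uinf vinf x ∂(Qinf : Measure X)) ≤ ∫ x, l y vinf x ∂(Qinf : Measure X)) :
    Tendsto (fun n : ℕ =>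
        (∫ x, l (u n) (v n) x ∂(Q n : Measure X)) + (‖u n‖ ^ 2 - v n ^ 2) / n)
      atTop (𝓝 (∫ x, l uinf vinf x ∂(Qinf : Measure X))) := by
  refine tendsto_of_subseq_tendsto fun ns hns => ?_
  obtain ⟨⟨us, vs⟩, ⟨husY, hvsΛ⟩, φ, hφ, hlim⟩ :=
    (hYc.prod hΛc).tendsto_subseq (x := fun k => (u (ns k), v (ns k)))
      fun k => ⟨hu (ns k), hv (ns k)⟩
  have hσ : Tendsto (ns ∘ φ) atTop atTop := hns.comp hφ.tendsto_atTop
  have hconv {ys lams y lam} :=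
    tendsto_regularizedLoss (ys := ys) (lams := lams) (y := y) (lam := lam) hl hσ (hQ.comp hσ)
  have hsad : IsSaddlePointOn Y Λ (expectedLoss l Qinf) us vs :=
    IsSaddlePointOn.of_tendsto ((hσ.eventually_ge_atTop 1).mono fun k hk =>
      .of_forall_le_and_le (hsaddle _ hk)) hlim.fst_nhds hlim.snd_nhds hconv
  have hval : expectedLoss l Qinf us vs = expectedLoss l Qinf uinf vinf :=
    hsad.value_eq (.of_forall_le_and_le hsaddleinf) husY hvsΛ huinf hvinf
  have hvalues := hconv hlim.fst_nhds hlim.snd_nhds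
  rw [hval] at hvalues
  exact ⟨φ, hvalues⟩

/-- If `Q_n → Q∞` weakly and `(u_n, v_n)` is a saddle point of the regularized functional
`L_n(y,λ,Q_n) = E_{Q_n}[l] + (‖y‖² − λ²)/n`, then `L_n(u_n,v_n,Q_n) → L(u∞,v∞,Q∞)`
for any saddle point `(u∞, v∞)` of `L(·,·,Q∞)`. -/
theorem stmt5 {m : ℕ} {X : Type*}
    [MetricSpace X] [CompactSpace X] [MeasurableSpace X] [BorelSpace X]
    (Y : Set (EuclideanSpace ℝ (Fin m))) (hYc : IsCompact Y) (hYconv : Convex ℝ Y)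
    (hYne : Y.Nonempty)
    (Λ : Set ℝ) (hΛc : IsCompact Λ) (hΛconv : Convex ℝ Λ) (hΛne : Λ.Nonempty)
    (l : EuclideanSpace ℝ (Fin m) → ℝ → X → ℝ)
    (hl : Continuous fun p : EuclideanSpace ℝ (Fin m) × ℝ × X => l p.1 p.2.1 p.2.2)
    (hconv : ∀ lam ∈ Λ, ∀ x : X, ConvexOn ℝ Y fun y => l y lam x)
    (hconc : ∀ y ∈ Y, ∀ x : X, ConcaveOn ℝ Λ fun lam => l y lam x)
    (Q : ℕ → ProbabilityMeasure X) (Qinf : ProbabilityMeasure X)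
    (hQ : Tendsto Q atTop (𝓝 Qinf))
    (u : ℕ → EuclideanSpace ℝ (Fin m)) (v : ℕ → ℝ)
    (hu : ∀ n, u n ∈ Y) (hv : ∀ n, v n ∈ Λ)
    (hsaddle : ∀ n : ℕ, 1 ≤ n → ∀ y ∈ Y, ∀ lam ∈ Λ,
      ((∫ x, l (u n) lam x ∂(Q n : Measure X)) + (‖u n‖ ^ 2 - lam ^ 2) / n
          ≤ (∫ x, l (u n) (v n) x ∂(Q n : Measure X)) + (‖u n‖ ^ 2 - v n ^ 2) / n) ∧
        ((∫ x, l (u n) (v n) x ∂(Q n : Measure X)) + (‖u n‖ ^ 2 - v n ^ 2) / n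
          ≤ (∫ x, l y (v n) x ∂(Q n : Measure X)) + (‖y‖ ^ 2 - v n ^ 2) / n))
    (uinf : EuclideanSpace ℝ (Fin m)) (vinf : ℝ) (huinf : uinf ∈ Y) (hvinf : vinf ∈ Λ)
    (hsaddleinf : ∀ y ∈ Y, ∀ lam ∈ Λ,
      (∫ x, l uinf lam x ∂(Qinf : Measure X)) ≤ (∫ x, l uinf vinf x ∂(Qinf : Measure X)) ∧
        (∫ x, l uinf vinf x ∂(Qinf : Measure X)) ≤ ∫ x, l y vinf x ∂(Qinf : Measure X)) :
    Tendsto (fun n : ℕ =>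
        (∫ x, l (u n) (v n) x ∂(Q n : Measure X)) + (‖u n‖ ^ 2 - v n ^ 2) / n)
      atTop (𝓝 (∫ x, l uinf vinf x ∂(Qinf : Measure X))) :=
  stmt5_general Y hYc Λ hΛc l hl Q Qinf hQ u v hu hv hsaddle uinf vinf huinf hvinf hsaddleinf
end

section
/- Let (X_i)_{i∈ℤ} be stationary and ergodic with regular conditional distributions P_k = P(X_0 ∈ · | X_{−k}^{−1}). Define Z_k = min_{y ∈ Y(F_{−k}^{−1})} E[ max_{λ ∈ Λ(F_{−∞}^{−1})} E[l(y, λ, X_0) | F_{−∞}^{−1}] | F_{−k}^{−1} ], where the min is over all σ(X_{−k}^{−1})-measurable Y-valued functions and the max over all σ(F_{−∞}^{−1})-measurable Λ-valued functions, with l bounded continuous. Then (Z_k, σ(X_{−k}^{−1}))_{k≥1} is a supermartingale: E[Z_{k+1} | X_{−k}^{−1}] ≤ Z_k. -/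
open MeasureTheory Filter Topology

/-- The σ-algebra generated by the infinite past `…, X₋₂, X₋₁`. -/
def pastSigmaAll {Ω X : Type*} [MeasurableSpace X] (Xp : ℤ → Ω → X) : MeasurableSpace Ω :=
  ⨆ i : {i : ℤ // i < 0}, MeasurableSpace.comap (Xp i.1) inferInstance

/-- The σ-algebra generated by the `k`-step past `X₋ₖ, …, X₋₁`. -/
def pastSigmaK {Ω X : Type*} [MeasurableSpace X] (Xp : ℤ → Ω → X) (k : ℕ) :
    MeasurableSpace Ω :=
  ⨆ i : {i : ℤ // -(k : ℤ) ≤ i ∧ i < 0}, MeasurableSpace.comap (Xp i.1) inferInstance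

/-- The conditional minimax values
`Z_k = min_{y F₋ₖ-meas.} E[ max_{λ} E[l(y, λ, X₀) | F₋∞] | F₋ₖ ]`
form a supermartingale: `E[Z_{k+1} | F₋ₖ] ≤ Z_k`. -/
theorem stmt9 {Ω X Y Λ : Type*}
    [MeasurableSpace Ω] (μ : Measure Ω) [IsProbabilityMeasure μ]
    [MetricSpace X] [CompactSpace X] [MeasurableSpace X] [BorelSpace X]
    [MetricSpace Y] [CompactSpace Y] [Nonempty Y] [MeasurableSpace Y] [BorelSpace Y]
    [MetricSpace Λ] [CompactSpace Λ] [Nonempty Λ]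
    (T : Ω → Ω) (hT : Ergodic T μ)
    (Xp : ℤ → Ω → X) (hXm : ∀ i, Measurable (Xp i))
    (hshift : ∀ i ω, Xp (i + 1) ω = Xp i (T ω))
    (l : Y → Λ → X → ℝ)
    (hl : Continuous fun p : Y × Λ × X => l p.1 p.2.1 p.2.2)
    -- `P∞`: regular conditional distribution of `X₀` given the infinite past,
    -- realizing the inner maximum over `F₋∞`-measurable `λ` as a pointwise supremum
    (Pinf : Ω → ProbabilityMeasure X)
    (hPinf : ∀ f : X → ℝ, Continuous f →
      (fun ω => ∫ x, f x ∂(Pinf ω : Measure X))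
        =ᵐ[μ] μ[(fun ω => f (Xp 0 ω)) | pastSigmaAll Xp])
    (Z : ℕ → Ω → ℝ)
    (hZmeas : ∀ k, Measurable[pastSigmaK Xp k] (Z k))
    -- `Z k` is below the conditional value of every `F₋ₖ`-measurable selection …
    (hZle : ∀ k, ∀ y : Ω → Y, Measurable[pastSigmaK Xp k] y →
      Z k ≤ᵐ[μ] μ[(fun ω => ⨆ lam : Λ, ∫ x, l (y ω) lam x ∂(Pinf ω : Measure X))
        | pastSigmaK Xp k])
    -- … and the minimum is attained by some `F₋ₖ`-measurable selection
    (hZatt : ∀ k, ∃ y : Ω → Y, Measurable[pastSigmaK Xp k] y ∧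
      Z k =ᵐ[μ] μ[(fun ω => ⨆ lam : Λ, ∫ x, l (y ω) lam x ∂(Pinf ω : Measure X))
        | pastSigmaK Xp k]) :
    ∀ k : ℕ, μ[Z (k + 1) | pastSigmaK Xp k] ≤ᵐ[μ] Z k := by

  intro k
  -- σ-algebra inclusions
  have hle : pastSigmaK Xp k ≤ pastSigmaK Xp (k + 1) := by
    refine iSup_le fun i => ?_
    have hi : -((k + 1 : ℕ) : ℤ) ≤ i.1 ∧ i.1 < 0 := by
      obtain ⟨h1, h2⟩ := i.2
      constructor
      · push_cast
        push_cast at h1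
        linarith
      · exact h2
    exact le_iSup (fun j : {i : ℤ // -((k + 1 : ℕ) : ℤ) ≤ i ∧ i < 0} =>
      MeasurableSpace.comap (Xp j.1) inferInstance) ⟨i.1, hi⟩
  have hle2 : pastSigmaK Xp (k + 1) ≤ ‹MeasurableSpace Ω› :=
    iSup_le fun i => measurable_iff_comap_le.mp (hXm i.1)
  -- the optimal selection at level k
  obtain ⟨y, hym, hyZ⟩ := hZatt k
  set g : Ω → ℝ := fun ω => ⨆ lam : Λ, ∫ x, l (y ω) lam x ∂(Pinf ω : Measure X) with hg
  have hym' : Measurable[pastSigmaK Xp (k + 1)] y := hym.mono hle le_rfl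
  have h1 : Z (k + 1) ≤ᵐ[μ] μ[g | pastSigmaK Xp (k + 1)] := hZle (k + 1) y hym'
  -- integrability of Z (k+1)
  obtain ⟨y', _, hy'Z⟩ := hZatt (k + 1)
  have hint : Integrable (Z (k + 1)) μ := integrable_condExp.congr hy'Z.symm
  calc μ[Z (k + 1) | pastSigmaK Xp k]
      ≤ᵐ[μ] μ[μ[g | pastSigmaK Xp (k + 1)] | pastSigmaK Xp k] :=
        condExp_mono hint integrable_condExp h1
    _ =ᵐ[μ] μ[g | pastSigmaK Xp k] := condExp_condExp_of_le hle hle2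
    _ =ᵐ[μ] Z k := hyZ.symm
end

section
/- With Z_k the supermartingale of conditional minimax values and Z'_k the analogously defined submartingale (max over σ(X_{−k}^{−1})-measurable λ of the conditional expectation of the inner min), both Z_k and Z'_k converge almost surely and in L¹ to Z∞ = E[l(y*∞, λ*∞, X_0) | F_{−∞}^{−1}], and hence E[Z_k] → V* and E[Z'_k] → V* where V* = E[Z∞]. -/
open MeasureTheory Filter Topology

/-!
Write `F ω (y, λ) = ∫ l(y, λ, x) dPinf ω`, `Φ ω y = ⨆ λ, F ω (y, λ)` and `g = F (y*, λ*)`.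
The saddle point gives `g ≤ Φ(·, y)` for every `y`, hence `E[g | F_k] ≤ Z_k`, and the left side
tends to `g` by Lévy's upward theorem. Conversely, a finitely-valued `F_{-∞}`-measurable `c` is a.s.
eventually equal to an adapted sequence `y_k` (take the value whose conditional probability given
`F_k` exceeds `1/2`), so `limsup Z_k ≤ lim E[Φ(·, c) | F_k] = Φ(·, c)`; letting `c → y*` gives
`limsup Z_k ≤ Φ(·, y*) = g`. Everything is bounded, so the convergence also holds in `L¹`, and the
statement for `Z'_k` is the one for `Z_k` in the game `-l` with the players exchanged.
-/

open Set

theorem exists_simpleFunc_tendsto_id (W : Type*) [EMetricSpace W]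
    [TopologicalSpace.SeparableSpace W] [Nonempty W] [MeasurableSpace W] [OpensMeasurableSpace W] :
    ∃ s : ℕ → SimpleFunc W W, ∀ w, Tendsto (fun n => s n w) atTop (𝓝 w) := by
  obtain ⟨e, he⟩ := TopologicalSpace.exists_dense_seq W
  exact ⟨SimpleFunc.nearestPt e, fun w => SimpleFunc.tendsto_nearestPt (by simp [he.closure_range])⟩

theorem eval_eq_sum_indicator {Ω W : Type*} {f : W → Ω → ℝ} {y : Ω → W} {s : Finset W}
    (hys : ∀ ω, y ω ∈ s) : (fun ω => f (y ω) ω) = ∑ p ∈ s, (y ⁻¹' {p}).indicator (f p) := by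
  classical
  ext ω
  simp [Finset.sum_apply, indicator_apply, hys ω]

section SubSigmaAlgebra

variable {Ω W : Type*} {m m0 : MeasurableSpace Ω} {μ : Measure[m0] Ω}

theorem aestronglyMeasurable_of_tendsto_ae_real {f : ℕ → Ω → ℝ} {g : Ω → ℝ}
    (hf : ∀ n, AEStronglyMeasurable[m] (f n) μ)
    (hlim : ∀ᵐ ω ∂μ, Tendsto (fun n => f n ω) atTop (𝓝 (g ω))) :
    AEStronglyMeasurable[m] g μ := by
  refine ⟨fun ω => limsup (fun n => (hf n).mk (f n) ω) atTop,
    (Measurable.limsup fun n => (hf n).stronglyMeasurable_mk.measurable).stronglyMeasurable, ?_⟩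
  filter_upwards [hlim, ae_all_iff.2 fun n => (hf n).ae_eq_mk] with ω hω hmk
  exact (hω.congr hmk).limsup_eq.symm

theorem aestronglyMeasurable_iSup_real {ι : Type*} [Countable ι] {f : ι → Ω → ℝ}
    (hf : ∀ i, AEStronglyMeasurable[m] (f i) μ) :
    AEStronglyMeasurable[m] (fun ω => ⨆ i, f i ω) μ := by
  refine ⟨fun ω => ⨆ i, (hf i).mk (f i) ω,
    (Measurable.iSup fun i => (hf i).stronglyMeasurable_mk.measurable).stronglyMeasurable, ?_⟩
  filter_upwards [ae_all_iff.2 fun i => (hf i).ae_eq_mk] with ω hω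
  simp only [hω]

theorem aestronglyMeasurable_iSup_of_continuous [TopologicalSpace W]
    [TopologicalSpace.SeparableSpace W] {F : Ω → W → ℝ} (hFc : ∀ ω, Continuous (F ω))
    (hFm : ∀ p, AEStronglyMeasurable[m] (F · p) μ) :
    AEStronglyMeasurable[m] (fun ω => ⨆ p, F ω p) μ := by
  obtain ⟨S, hSc, hSd⟩ := TopologicalSpace.exists_countable_dense W
  have : Countable S := hSc.to_subtype
  simp_rw [← hSd.ciSup' (hFc _)]
  exact aestronglyMeasurable_iSup_real fun p => hFm p

section FiniteRange

variable [MeasurableSpace W] [MeasurableSingletonClass W]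

theorem aestronglyMeasurable_eval_of_finite_range {f : W → Ω → ℝ}
    (hf : ∀ p, AEStronglyMeasurable[m] (f p) μ) {y : Ω → W} (hy : Measurable[m] y)
    (hfin : (range y).Finite) : AEStronglyMeasurable[m] (fun ω => f (y ω) ω) μ := by
  choose g hgm hfg using hf
  have hys : ∀ ω, y ω ∈ hfin.toFinset := fun ω => by simp
  refine ⟨fun ω => g (y ω) ω, ?_, ?_⟩
  · rw [eval_eq_sum_indicator hys]
    exact Finset.stronglyMeasurable_sum _ fun p _ =>
      (hgm p).indicator (hy (measurableSet_singleton p))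
  · filter_upwards [(ae_ball_iff hfin.countable).2 fun p _ => hfg p] with ω hω
    exact hω _ (mem_range_self ω)

theorem condExp_eval_ae_eq_of_finite_range (hm : m ≤ m0) {f : W → Ω → ℝ}
    (hf : ∀ p, Integrable (f p) μ) {y : Ω → W} (hy : Measurable[m] y) (hfin : (range y).Finite) :
    μ[fun ω => f (y ω) ω | m] =ᵐ[μ] fun ω => μ[f (y ω) | m] ω := by
  have hys : ∀ ω, y ω ∈ hfin.toFinset := fun ω => by simp
  have hfiber : ∀ p, MeasurableSet[m] (y ⁻¹' {p}) := fun p => hy (measurableSet_singleton p)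
  have hind : ∀ᵐ ω ∂μ, ∀ p ∈ hfin.toFinset,
      μ[(y ⁻¹' {p}).indicator (f p) | m] ω = (y ⁻¹' {p}).indicator (μ[f p | m]) ω :=
    (ae_ball_iff (Finset.countable_toSet _)).2 fun p _ => condExp_indicator (hf p) (hfiber p)
  rw [eval_eq_sum_indicator hys]
  filter_upwards [condExp_finsetSum (fun p _ => (hf p).indicator (hm _ (hfiber p))) m, hind]
    with ω hsum hω
  rw [hsum, Finset.sum_apply, Finset.sum_congr rfl hω, ← Finset.sum_apply,
    ← eval_eq_sum_indicator hys]

end FiniteRange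

theorem aestronglyMeasurable_eval_of_continuous [EMetricSpace W] [MeasurableSpace W]
    [OpensMeasurableSpace W] [TopologicalSpace.SeparableSpace W] [Nonempty W] {F : Ω → W → ℝ}
    (hFc : ∀ ω, Continuous (F ω)) (hFm : ∀ p, AEStronglyMeasurable[m] (F · p) μ)
    {c : Ω → W} (hc : Measurable[m] c) : AEStronglyMeasurable[m] (fun ω => F ω (c ω)) μ := by
  obtain ⟨s, hs⟩ := exists_simpleFunc_tendsto_id W
  refine aestronglyMeasurable_of_tendsto_ae_real (f := fun n ω => F ω (s n (c ω)))
    (fun n => aestronglyMeasurable_eval_of_finite_range hFm ((s n).measurable.comp hc)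
      ((s n).finite_range.subset (range_comp_subset_range _ _))) (ae_of_all _ fun ω => ?_)
  exact ((hFc ω).tendsto _).comp (hs (c ω))

end SubSigmaAlgebra

section Adapted

variable {Ω W : Type*} {m0 : MeasurableSpace Ω} {μ : Measure Ω} [IsFiniteMeasure μ]
  {ℱ : Filtration ℕ m0}

theorem ae_tendsto_condExp_of_aestronglyMeasurable {g : Ω → ℝ}
    (hgm : AEStronglyMeasurable[⨆ n, ℱ n] g μ) (hgi : Integrable g μ) :
    ∀ᵐ ω ∂μ, Tendsto (fun n => μ[g | ℱ n] ω) atTop (𝓝 (g ω)) := by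
  filter_upwards [tendsto_ae_condExp g, condExp_of_aestronglyMeasurable' (iSup_le ℱ.le) hgm hgi]
    with ω hω hgω
  rwa [hgω] at hω

open Classical in
noncomputable def firstHit (S : W → Set Ω) (d : W) : List W → Ω → W
  | [], _ => d
  | p :: L, ω => if ω ∈ S p then p else firstHit S d L ω

theorem firstHit_mem (S : W → Set Ω) (d : W) (L : List W) (ω : Ω) :
    firstHit S d L ω ∈ d :: L := by
  induction L with
  | nil => simp [firstHit]
  | cons p L ih =>
    by_cases h : ω ∈ S p
    · simp [firstHit, h]
    · simp only [firstHit, h, if_false]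
      rcases List.mem_cons.1 ih with h' | h' <;> simp [h']

theorem firstHit_eq {S : W → Set Ω} {d p : W} {L : List W} {ω : Ω} (hp : p ∈ L) (hωp : ω ∈ S p)
    (huniq : ∀ q ∈ L, ω ∈ S q → q = p) : firstHit S d L ω = p := by
  induction L with
  | nil => simp at hp
  | cons q L ih =>
    by_cases h : ω ∈ S q
    · obtain rfl := huniq q List.mem_cons_self h
      simp [firstHit, h]
    · have hpL : p ∈ L := (List.mem_cons.1 hp).resolve_left fun hpq => h (hpq ▸ hωp)
      simpa [firstHit, h] using ih hpL fun q' hq' => huniq q' (List.mem_cons_of_mem _ hq')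

theorem measurable_firstHit [MeasurableSpace W] {m : MeasurableSpace Ω} {S : W → Set Ω}
    (hS : ∀ p, MeasurableSet[m] (S p)) (d : W) (L : List W) : Measurable[m] (firstHit S d L) := by
  induction L with
  | nil => exact measurable_const
  | cons p L ih => exact Measurable.ite (hS p) measurable_const ih

theorem exists_adapted_eventually_eq [MeasurableSpace W] [MeasurableSingletonClass W] [Nonempty W]
    {c : Ω → W} (hc : Measurable[⨆ n, ℱ n] c) (hfin : (range c).Finite) :
    ∃ y : ℕ → Ω → W, (∀ k, Measurable[ℱ k] (y k)) ∧ (∀ k, (range (y k)).Finite) ∧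
      ∀ᵐ ω ∂μ, ∀ᶠ k in atTop, y k ω = c ω := by
  set L := hfin.toFinset.toList
  set P : ℕ → W → Ω → ℝ := fun k p => μ[(c ⁻¹' {p}).indicator 1 | ℱ k]
  refine ⟨fun k => firstHit (fun p => {ω | 1 / 2 < P k p ω}) (Classical.arbitrary W) L,
    fun k => measurable_firstHit (fun p => measurableSet_lt measurable_const
      stronglyMeasurable_condExp.measurable) _ _,
    fun k => (List.finite_toSet _).subset (range_subset_iff.2 fun ω => firstHit_mem _ _ _ ω), ?_⟩
  have hlevy : ∀ᵐ ω ∂μ, ∀ p ∈ range c,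
      Tendsto (fun k => P k p ω) atTop (𝓝 ((c ⁻¹' {p}).indicator 1 ω)) :=
    (ae_ball_iff hfin.countable).2 fun p _ =>
      ae_tendsto_condExp_of_aestronglyMeasurable
        (stronglyMeasurable_one.indicator (hc (measurableSet_singleton p))).aestronglyMeasurable
        ((integrable_const 1).indicator (iSup_le ℱ.le _ (hc (measurableSet_singleton p))))
  filter_upwards [hlevy] with ω hω
  have hself : ∀ᶠ k in atTop, 1 / 2 < P k (c ω) ω := by
    have := hω (c ω) (mem_range_self ω)
    simp only [mem_preimage, mem_singleton_iff, indicator_of_mem, Pi.one_apply] at this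
    exact this.eventually (lt_mem_nhds (by norm_num))
  have hothers : ∀ᶠ k in atTop, ∀ q ∈ range c, 1 / 2 < P k q ω → q = c ω := by
    refine hfin.eventually_all.2 fun q hq => ?_
    by_cases hqc : q = c ω
    · exact Eventually.of_forall fun _ _ => hqc
    · have := hω q hq
      rw [indicator_of_notMem (fun h => hqc h.symm)] at this
      filter_upwards [this.eventually (gt_mem_nhds (by norm_num : (0 : ℝ) < 1 / 2))]
        with k hk hk' using absurd hk' (not_lt.2 hk.le)
  filter_upwards [hself, hothers] with k h1 h2
  exact firstHit_eq (by simp [L]) h1 fun q hq hq' => h2 q (by simpa [L] using hq) hq'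

theorem ae_eventually_lt_of_finite_range [MeasurableSpace W] [MeasurableSingletonClass W]
    [Nonempty W] {Φ : Ω → W → ℝ} (hΦm : ∀ p, AEStronglyMeasurable[⨆ n, ℱ n] (Φ · p) μ)
    (hΦi : ∀ p, Integrable (Φ · p) μ) {Z : ℕ → Ω → ℝ}
    (hZ : ∀ k (y : Ω → W), Measurable[ℱ k] y → Z k ≤ᵐ[μ] μ[fun ω => Φ ω (y ω) | ℱ k])
    {c : Ω → W} (hc : Measurable[⨆ n, ℱ n] c) (hfin : (range c).Finite) :
    ∀ᵐ ω ∂μ, ∀ ε > 0, ∀ᶠ k in atTop, Z k ω < Φ ω (c ω) + ε := by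
  obtain ⟨y, hym, hyfin, hyc⟩ := exists_adapted_eventually_eq (μ := μ) hc hfin
  have hZy : ∀ᵐ ω ∂μ, ∀ k, Z k ω ≤ μ[(Φ · (y k ω)) | ℱ k] ω := ae_all_iff.2 fun k =>
    (hZ k (y k) (hym k)).trans
      (condExp_eval_ae_eq_of_finite_range (ℱ.le k) hΦi (hym k) (hyfin k)).le
  have hlevy : ∀ᵐ ω ∂μ, ∀ p ∈ range c,
      Tendsto (fun k => μ[(Φ · p) | ℱ k] ω) atTop (𝓝 (Φ ω p)) :=
    (ae_ball_iff hfin.countable).2 fun p _ =>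
      ae_tendsto_condExp_of_aestronglyMeasurable (hΦm p) (hΦi p)
  filter_upwards [hZy, hlevy, hyc] with ω hZω hlevyω hyω ε hε
  filter_upwards [hyω, (hlevyω (c ω) (mem_range_self ω)).eventually
    (gt_mem_nhds (lt_add_of_pos_right _ hε))] with k hk hlt
  exact (hZω k).trans_lt (hk ▸ hlt)

end Adapted

theorem tendsto_of_le_of_eventually_lt {a b v : ℕ → ℝ} {L : ℝ} (hb : Tendsto b atTop (𝓝 L))
    (hba : ∀ k, b k ≤ a k) (hv : Tendsto v atTop (𝓝 L))
    (hav : ∀ n, ∀ ε > 0, ∀ᶠ k in atTop, a k < v n + ε) : Tendsto a atTop (𝓝 L) := by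
  refine tendsto_order.2 ⟨fun x hx => ((tendsto_order.1 hb).1 x hx).mono fun k hk =>
    hk.trans_le (hba k), fun x hx => ?_⟩
  obtain ⟨n, hn⟩ := ((tendsto_order.1 hv).2 ((L + x) / 2) (by linarith)).exists
  filter_upwards [hav n ((x - L) / 2) (by linarith)] with k hk
  linarith

theorem tendsto_integral_abs_sub_of_ae_tendsto {Ω : Type*} {m0 : MeasurableSpace Ω}
    {μ : Measure Ω} [IsFiniteMeasure μ] {W : ℕ → Ω → ℝ} {g : Ω → ℝ} {C : ℝ}
    (hW : ∀ k, AEStronglyMeasurable (W k) μ) (hWC : ∀ k, ∀ᵐ ω ∂μ, |W k ω| ≤ C)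
    (hlim : ∀ᵐ ω ∂μ, Tendsto (fun k => W k ω) atTop (𝓝 (g ω))) :
    Tendsto (fun k => ∫ ω, |W k ω - g ω| ∂μ) atTop (𝓝 0) := by
  have hg : AEStronglyMeasurable g μ := aestronglyMeasurable_of_tendsto_ae _ hW hlim
  have hgC : ∀ᵐ ω ∂μ, |g ω| ≤ C := by
    filter_upwards [hlim, ae_all_iff.2 hWC] with ω hω hC
    exact le_of_tendsto' hω.abs hC
  have := tendsto_integral_of_dominated_convergence (f := fun _ => 0) (fun _ => C + C)
    (fun k => ((hW k).sub hg).norm) (integrable_const _)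
    (fun k => by
      filter_upwards [hWC k, hgC] with ω h1 h2
      rw [Real.norm_eq_abs, abs_norm, Pi.sub_apply, Real.norm_eq_abs]
      exact (abs_sub _ _).trans (add_le_add h1 h2))
    (by
      filter_upwards [hlim] with ω hω
      simpa using (hω.sub_const (g ω)).norm)
  simpa only [integral_zero, Pi.sub_apply, Real.norm_eq_abs] using this

theorem Real.neg_iInf {ι : Sort*} (f : ι → ℝ) : -(⨅ i, f i) = ⨆ i, -f i := by
  rw [iInf, Real.sInf_def, neg_neg, iSup, neg_range]

theorem abs_ciSup_le {ι : Sort*} [Nonempty ι] {f : ι → ℝ} {C : ℝ} (h : ∀ i, |f i| ≤ C) :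
    |⨆ i, f i| ≤ C :=
  abs_le.2 ⟨(abs_le.1 (h (Classical.arbitrary ι))).1.trans
      (le_ciSup ⟨C, forall_mem_range.2 fun i => (abs_le.1 (h i)).2⟩ _),
    ciSup_le fun i => (abs_le.1 (h i)).2⟩

theorem CompactSpace.continuous_iSup {Y Λ : Type*} [TopologicalSpace Y] [TopologicalSpace Λ]
    [CompactSpace Λ] {f : Y → Λ → ℝ} (hf : Continuous ↿f) : Continuous fun y => ⨆ lam, f y lam := by
  simpa only [← sSup_range, image_univ] using isCompact_univ.continuous_sSup hf

section Minimax

variable {Ω Y Λ : Type*} {m0 : MeasurableSpace Ω} {μ : Measure Ω} [IsFiniteMeasure μ]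
  {ℱ : Filtration ℕ m0}
  [MetricSpace Y] [CompactSpace Y] [Nonempty Y] [MeasurableSpace Y] [BorelSpace Y]
  [MetricSpace Λ] [CompactSpace Λ] [Nonempty Λ] [MeasurableSpace Λ] [BorelSpace Λ]
  {F : Ω → Y × Λ → ℝ} {C : ℝ}

theorem ae_tendsto_condMinimax (hFc : ∀ ω, Continuous (F ω)) (hFC : ∀ ω p, |F ω p| ≤ C)
    (hFm : ∀ p, AEStronglyMeasurable[⨆ n, ℱ n] (F · p) μ) {Z : ℕ → Ω → ℝ}
    (hZle : ∀ k (y : Ω → Y), Measurable[ℱ k] y →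
      Z k ≤ᵐ[μ] μ[fun ω => ⨆ lam, F ω (y ω, lam) | ℱ k])
    (hZatt : ∀ k, ∃ y : Ω → Y, Measurable[ℱ k] y ∧
      Z k =ᵐ[μ] μ[fun ω => ⨆ lam, F ω (y ω, lam) | ℱ k])
    {ystar : Ω → Y} {lamstar : Ω → Λ} (hystar : Measurable[⨆ n, ℱ n] ystar)
    (hlamstar : Measurable[⨆ n, ℱ n] lamstar)
    (hsaddle : ∀ᵐ ω ∂μ, ∀ y lam, F ω (ystar ω, lam) ≤ F ω (ystar ω, lamstar ω) ∧
      F ω (ystar ω, lamstar ω) ≤ F ω (y, lamstar ω)) :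
    ∀ᵐ ω ∂μ, Tendsto (fun k => Z k ω) atTop (𝓝 (F ω (ystar ω, lamstar ω))) := by
  have hle : ⨆ n, ℱ n ≤ m0 := iSup_le ℱ.le
  set Φ : Ω → Y → ℝ := fun ω y => ⨆ lam, F ω (y, lam)
  have hΦbdd : ∀ ω y, BddAbove (range fun lam => F ω (y, lam)) := fun ω y =>
    ⟨C, forall_mem_range.2 fun lam => (abs_le.1 (hFC ω _)).2⟩
  have hΦc : ∀ ω, Continuous (Φ ω) := fun ω => CompactSpace.continuous_iSup (hFc ω)
  have hΦm : ∀ y, AEStronglyMeasurable[⨆ n, ℱ n] (Φ · y) μ := fun y =>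
    aestronglyMeasurable_iSup_of_continuous (fun ω => (hFc ω).comp (Continuous.prodMk_right y))
      fun lam => hFm (y, lam)
  have hΦi : ∀ y : Ω → Y, Measurable y → Integrable (fun ω => Φ ω (y ω)) μ := fun y hy =>
    .of_bound (aestronglyMeasurable_eval_of_continuous hΦc (fun y => (hΦm y).mono hle) hy) C
      (ae_of_all _ fun ω => abs_ciSup_le fun lam => hFC ω _)
  set g : Ω → ℝ := fun ω => F ω (ystar ω, lamstar ω)
  have hgm : AEStronglyMeasurable[⨆ n, ℱ n] g μ :=
    aestronglyMeasurable_eval_of_continuous hFc hFm (hystar.prodMk hlamstar)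
  have hgi : Integrable g μ := .of_bound (hgm.mono hle) C (ae_of_all _ fun ω => hFC ω _)
  have hlower : ∀ k, μ[g | ℱ k] ≤ᵐ[μ] Z k := fun k => by
    obtain ⟨y, hy, hZy⟩ := hZatt k
    refine (condExp_mono hgi (hΦi y (hy.mono (ℱ.le k) le_rfl)) ?_).trans hZy.symm.le
    filter_upwards [hsaddle] with ω hω
    exact (hω (y ω) (lamstar ω)).2.trans (le_ciSup (hΦbdd ω (y ω)) _)
  obtain ⟨s, hs⟩ := exists_simpleFunc_tendsto_id Y
  have hupper : ∀ n, ∀ᵐ ω ∂μ, ∀ ε > 0, ∀ᶠ k in atTop, Z k ω < Φ ω (s n (ystar ω)) + ε :=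
    fun n => ae_eventually_lt_of_finite_range hΦm (fun y => hΦi _ measurable_const) hZle
      ((s n).measurable.comp hystar) ((s n).finite_range.subset (range_comp_subset_range _ _))
  have hΦg : ∀ᵐ ω ∂μ, Φ ω (ystar ω) = g ω := by
    filter_upwards [hsaddle] with ω hω
    exact le_antisymm (ciSup_le fun lam => (hω (ystar ω) lam).1) (le_ciSup (hΦbdd ω _) _)
  filter_upwards [ae_tendsto_condExp_of_aestronglyMeasurable hgm hgi, ae_all_iff.2 hlower,
    ae_all_iff.2 hupper, hΦg] with ω hlevy hlow hup hΦω
  have hΦlim := ((hΦc ω).tendsto _).comp (hs (ystar ω))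
  rw [hΦω] at hΦlim
  exact tendsto_of_le_of_eventually_lt hlevy hlow hΦlim hup

theorem tendsto_condMinimax (hFc : ∀ ω, Continuous (F ω)) (hFC : ∀ ω p, |F ω p| ≤ C)
    (hFm : ∀ p, AEStronglyMeasurable[⨆ n, ℱ n] (F · p) μ) {Z : ℕ → Ω → ℝ}
    (hZle : ∀ k (y : Ω → Y), Measurable[ℱ k] y →
      Z k ≤ᵐ[μ] μ[fun ω => ⨆ lam, F ω (y ω, lam) | ℱ k])
    (hZatt : ∀ k, ∃ y : Ω → Y, Measurable[ℱ k] y ∧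
      Z k =ᵐ[μ] μ[fun ω => ⨆ lam, F ω (y ω, lam) | ℱ k])
    {ystar : Ω → Y} {lamstar : Ω → Λ} (hystar : Measurable[⨆ n, ℱ n] ystar)
    (hlamstar : Measurable[⨆ n, ℱ n] lamstar)
    (hsaddle : ∀ᵐ ω ∂μ, ∀ y lam, F ω (ystar ω, lam) ≤ F ω (ystar ω, lamstar ω) ∧
      F ω (ystar ω, lamstar ω) ≤ F ω (y, lamstar ω)) :
    (∀ᵐ ω ∂μ, Tendsto (fun k => Z k ω) atTop (𝓝 (F ω (ystar ω, lamstar ω)))) ∧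
    Tendsto (fun k => ∫ ω, |Z k ω - F ω (ystar ω, lamstar ω)| ∂μ) atTop (𝓝 0) ∧
    Tendsto (fun k => ∫ ω, Z k ω ∂μ) atTop (𝓝 (∫ ω, F ω (ystar ω, lamstar ω) ∂μ)) := by
  have hlim := ae_tendsto_condMinimax hFc hFC hFm hZle hZatt hystar hlamstar hsaddle
  have hZm : ∀ k, AEStronglyMeasurable (Z k) μ := fun k => by
    obtain ⟨y, -, hZy⟩ := hZatt k
    exact (stronglyMeasurable_condExp.mono (ℱ.le k)).aestronglyMeasurable.congr hZy.symm
  have hZC : ∀ k, ∀ᵐ ω ∂μ, |Z k ω| ≤ C := fun k => by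
    obtain ⟨y, -, hZy⟩ := hZatt k
    filter_upwards [hZy, ae_bdd_abs_condExp_of_ae_bdd_abs (m := ℱ k)
      (ae_of_all μ fun ω => abs_ciSup_le fun lam => hFC ω (y ω, lam))] with ω hZω hC
    rwa [hZω]
  exact ⟨hlim, tendsto_integral_abs_sub_of_ae_tendsto hZm hZC hlim,
    tendsto_integral_of_dominated_convergence (fun _ => C) hZm (integrable_const C) hZC hlim⟩

theorem tendsto_condMaximin (hFc : ∀ ω, Continuous (F ω)) (hFC : ∀ ω p, |F ω p| ≤ C)
    (hFm : ∀ p, AEStronglyMeasurable[⨆ n, ℱ n] (F · p) μ) {Z' : ℕ → Ω → ℝ}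
    (hZ'ge : ∀ k (lamf : Ω → Λ), Measurable[ℱ k] lamf →
      μ[fun ω => ⨅ y, F ω (y, lamf ω) | ℱ k] ≤ᵐ[μ] Z' k)
    (hZ'att : ∀ k, ∃ lamf : Ω → Λ, Measurable[ℱ k] lamf ∧
      Z' k =ᵐ[μ] μ[fun ω => ⨅ y, F ω (y, lamf ω) | ℱ k])
    {ystar : Ω → Y} {lamstar : Ω → Λ} (hystar : Measurable[⨆ n, ℱ n] ystar)
    (hlamstar : Measurable[⨆ n, ℱ n] lamstar)
    (hsaddle : ∀ᵐ ω ∂μ, ∀ y lam, F ω (ystar ω, lam) ≤ F ω (ystar ω, lamstar ω) ∧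
      F ω (ystar ω, lamstar ω) ≤ F ω (y, lamstar ω)) :
    (∀ᵐ ω ∂μ, Tendsto (fun k => Z' k ω) atTop (𝓝 (F ω (ystar ω, lamstar ω)))) ∧
    Tendsto (fun k => ∫ ω, |Z' k ω - F ω (ystar ω, lamstar ω)| ∂μ) atTop (𝓝 0) ∧
    Tendsto (fun k => ∫ ω, Z' k ω ∂μ) atTop (𝓝 (∫ ω, F ω (ystar ω, lamstar ω) ∂μ)) := by
  have hneg : ∀ k (lamf : Ω → Λ), μ[fun ω => ⨆ y, -F ω (y, lamf ω) | ℱ k] =ᵐ[μ]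
      -μ[fun ω => ⨅ y, F ω (y, lamf ω) | ℱ k] := fun k lamf => by
    simp_rw [← Real.neg_iInf]
    exact condExp_neg _ _
  obtain ⟨hlim, hL1, hmean⟩ := tendsto_condMinimax (F := fun ω p => -F ω p.swap)
    (Z := fun k ω => -Z' k ω) (ystar := lamstar) (lamstar := ystar)
    (fun ω => ((hFc ω).comp continuous_swap).neg) (fun ω p => (abs_neg _).trans_le (hFC ω _))
    (fun p => (hFm _).neg)
    (fun k lamf hlamf => by
      filter_upwards [hZ'ge k lamf hlamf, hneg k lamf] with ω hω hnegω
      exact (neg_le_neg hω).trans_eq hnegω.symm)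
    (fun k => by
      obtain ⟨lamf, hlamf, hZ'⟩ := hZ'att k
      refine ⟨lamf, hlamf, ?_⟩
      filter_upwards [hZ', hneg k lamf] with ω hω hnegω
      exact (congrArg Neg.neg hω).trans hnegω.symm)
    hlamstar hystar (by
      filter_upwards [hsaddle] with ω hω lam y
      exact ⟨neg_le_neg (hω y lam).2, neg_le_neg (hω (ystar ω) lam).1⟩)
  refine ⟨?_, ?_, ?_⟩
  · filter_upwards [hlim] with ω hω
    simpa using hω.neg
  · simpa only [neg_sub_neg, abs_sub_comm, Prod.swap_prod_mk] using hL1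
  · simpa only [integral_neg, neg_neg, Prod.swap_prod_mk] using hmean.neg

end Minimax

theorem exists_forall_abs_integral_le {A X : Type*} [TopologicalSpace A] [CompactSpace A]
    [TopologicalSpace X] [CompactSpace X] [MeasurableSpace X] {f : A → X → ℝ}
    (hf : Continuous ↿f) :
    ∃ C, ∀ (ν : ProbabilityMeasure X) a, |∫ x, f a x ∂(ν : Measure X)| ≤ C := by
  obtain ⟨C, hC⟩ := (isCompact_range hf).isBounded.exists_norm_le
  refine ⟨C, fun ν a => ?_⟩
  simpa using norm_integral_le_of_norm_le_const (μ := (ν : Measure X))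
    (ae_of_all _ fun x => hC (f a x) ⟨(a, x), rfl⟩)

section Past

variable {Ω X : Type*} [MeasurableSpace X] (Xp : ℤ → Ω → X)

theorem pastSigmaK_mono : Monotone (pastSigmaK Xp) := fun k k' hkk' =>
  iSup_le fun i => le_iSup_of_le ⟨i.1, le_trans (by omega) i.2.1, i.2.2⟩ le_rfl

theorem iSup_pastSigmaK : ⨆ k, pastSigmaK Xp k = pastSigmaAll Xp :=
  le_antisymm (iSup_le fun _ => iSup_le fun i => le_iSup_of_le ⟨i.1, i.2.2⟩ le_rfl)
    (iSup_le fun i => le_iSup_of_le (-i.1).toNat (le_iSup_of_le ⟨i.1, by omega, i.2⟩ le_rfl))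

def pastFiltration [m0 : MeasurableSpace Ω] (hXm : ∀ i, Measurable (Xp i)) : Filtration ℕ m0 where
  seq := pastSigmaK Xp
  mono' := pastSigmaK_mono Xp
  le' _ := iSup_le fun i => (hXm i.1).comap_le

end Past

theorem stmt10_general {Ω X Y Λ : Type*}
    [MeasurableSpace Ω] (μ : Measure Ω) [IsProbabilityMeasure μ]
    [MetricSpace X] [CompactSpace X] [MeasurableSpace X] [BorelSpace X]
    [MetricSpace Y] [CompactSpace Y] [Nonempty Y] [MeasurableSpace Y] [BorelSpace Y]
    [MetricSpace Λ] [CompactSpace Λ] [Nonempty Λ] [MeasurableSpace Λ] [BorelSpace Λ]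
    (Xp : ℤ → Ω → X) (hXm : ∀ i, Measurable (Xp i))
    (l : Y → Λ → X → ℝ)
    (hl : Continuous fun p : Y × Λ × X => l p.1 p.2.1 p.2.2)
    (Pinf : Ω → ProbabilityMeasure X)
    (hPinf : ∀ f : X → ℝ, Continuous f →
      (fun ω => ∫ x, f x ∂(Pinf ω : Measure X))
        =ᵐ[μ] μ[(fun ω => f (Xp 0 ω)) | pastSigmaAll Xp])
    -- the conditional minimax values `Z_k`
    (Z : ℕ → Ω → ℝ)
    (hZle : ∀ k, ∀ y : Ω → Y, Measurable[pastSigmaK Xp k] y →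
      Z k ≤ᵐ[μ] μ[(fun ω => ⨆ lam : Λ, ∫ x, l (y ω) lam x ∂(Pinf ω : Measure X))
        | pastSigmaK Xp k])
    (hZatt : ∀ k, ∃ y : Ω → Y, Measurable[pastSigmaK Xp k] y ∧
      Z k =ᵐ[μ] μ[(fun ω => ⨆ lam : Λ, ∫ x, l (y ω) lam x ∂(Pinf ω : Measure X))
        | pastSigmaK Xp k])
    -- the conditional maximin values `Z'_k`
    (Z' : ℕ → Ω → ℝ)
    (hZ'ge : ∀ k, ∀ lamf : Ω → Λ, Measurable[pastSigmaK Xp k] lamf →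
      μ[(fun ω => ⨅ y : Y, ∫ x, l y (lamf ω) x ∂(Pinf ω : Measure X))
        | pastSigmaK Xp k] ≤ᵐ[μ] Z' k)
    (hZ'att : ∀ k, ∃ lamf : Ω → Λ, Measurable[pastSigmaK Xp k] lamf ∧
      Z' k =ᵐ[μ] μ[(fun ω => ⨅ y : Y, ∫ x, l y (lamf ω) x ∂(Pinf ω : Measure X))
        | pastSigmaK Xp k])
    -- the `F₋∞`-measurable saddle point `(y*∞, λ*∞)`
    (ystar : Ω → Y) (lamstar : Ω → Λ)
    (hystarm : Measurable[pastSigmaAll Xp] ystar)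
    (hlamstarm : Measurable[pastSigmaAll Xp] lamstar)
    (hsaddle : ∀ᵐ ω ∂μ, ∀ (y : Y) (lam : Λ),
      (∫ x, l (ystar ω) lam x ∂(Pinf ω : Measure X))
          ≤ (∫ x, l (ystar ω) (lamstar ω) x ∂(Pinf ω : Measure X)) ∧
        (∫ x, l (ystar ω) (lamstar ω) x ∂(Pinf ω : Measure X))
          ≤ ∫ x, l y (lamstar ω) x ∂(Pinf ω : Measure X)) :
    (∀ᵐ ω ∂μ, Tendsto (fun k => Z k ω) atTop
        (𝓝 (∫ x, l (ystar ω) (lamstar ω) x ∂(Pinf ω : Measure X)))) ∧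
    (∀ᵐ ω ∂μ, Tendsto (fun k => Z' k ω) atTop
        (𝓝 (∫ x, l (ystar ω) (lamstar ω) x ∂(Pinf ω : Measure X)))) ∧
    Tendsto (fun k => ∫ ω, |Z k ω
        - ∫ x, l (ystar ω) (lamstar ω) x ∂(Pinf ω : Measure X)| ∂μ) atTop (𝓝 0) ∧
    Tendsto (fun k => ∫ ω, |Z' k ω
        - ∫ x, l (ystar ω) (lamstar ω) x ∂(Pinf ω : Measure X)| ∂μ) atTop (𝓝 0) ∧
    Tendsto (fun k => ∫ ω, Z k ω ∂μ) atTop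
      (𝓝 (∫ ω, (∫ x, l (ystar ω) (lamstar ω) x ∂(Pinf ω : Measure X)) ∂μ)) ∧
    Tendsto (fun k => ∫ ω, Z' k ω ∂μ) atTop
      (𝓝 (∫ ω, (∫ x, l (ystar ω) (lamstar ω) x ∂(Pinf ω : Measure X)) ∂μ)) := by
  have hle : pastSigmaAll Xp ≤ ⨆ n, pastFiltration Xp hXm n := (iSup_pastSigmaK Xp).ge
  have hlc : Continuous ↿fun (p : Y × Λ) (x : X) => l p.1 p.2 x :=
    hl.comp (continuous_fst.fst.prodMk (continuous_fst.snd.prodMk continuous_snd))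
  obtain ⟨C, hC⟩ := exists_forall_abs_integral_le hlc
  have hFc : ∀ ω, Continuous fun p : Y × Λ => ∫ x, l p.1 p.2 x ∂(Pinf ω : Measure X) :=
    fun ω => by
      simpa using continuous_parametric_integral_of_continuous (μ := (Pinf ω : Measure X)) hlc
        isCompact_univ
  have hFm : ∀ p : Y × Λ, AEStronglyMeasurable[⨆ n, pastFiltration Xp hXm n]
      (fun ω => ∫ x, l p.1 p.2 x ∂(Pinf ω : Measure X)) μ := fun p =>
    ⟨_, stronglyMeasurable_condExp.mono hle, hPinf _ (hlc.comp (Continuous.prodMk_right p))⟩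
  obtain ⟨hZ, hZL1, hZmean⟩ := tendsto_condMinimax hFc (fun ω => hC (Pinf ω)) hFm hZle hZatt
    (hystarm.mono hle le_rfl) (hlamstarm.mono hle le_rfl) hsaddle
  obtain ⟨hZ', hZ'L1, hZ'mean⟩ := tendsto_condMaximin hFc (fun ω => hC (Pinf ω)) hFm hZ'ge
    hZ'att (hystarm.mono hle le_rfl) (hlamstarm.mono hle le_rfl) hsaddle
  exact ⟨hZ, hZ', hZL1, hZ'L1, hZmean, hZ'mean⟩

/-- The supermartingale `Z_k` of conditional minimax values and the submartingale `Z'_k`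
of conditional maximin values both converge, almost surely and in `L¹`, to
`Z∞ = E[l(y*∞, λ*∞, X₀) | F₋∞]`, and their expectations converge to `V* = E[Z∞]`. -/
theorem stmt10 {Ω X Y Λ : Type*}
    [MeasurableSpace Ω] (μ : Measure Ω) [IsProbabilityMeasure μ]
    [MetricSpace X] [CompactSpace X] [MeasurableSpace X] [BorelSpace X]
    [MetricSpace Y] [CompactSpace Y] [Nonempty Y] [MeasurableSpace Y] [BorelSpace Y]
    [MetricSpace Λ] [CompactSpace Λ] [Nonempty Λ] [MeasurableSpace Λ] [BorelSpace Λ]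
    (T : Ω → Ω) (hT : Ergodic T μ)
    (Xp : ℤ → Ω → X) (hXm : ∀ i, Measurable (Xp i))
    (hshift : ∀ i ω, Xp (i + 1) ω = Xp i (T ω))
    (l : Y → Λ → X → ℝ)
    (hl : Continuous fun p : Y × Λ × X => l p.1 p.2.1 p.2.2)
    (Pinf : Ω → ProbabilityMeasure X)
    (hPinf : ∀ f : X → ℝ, Continuous f →
      (fun ω => ∫ x, f x ∂(Pinf ω : Measure X))
        =ᵐ[μ] μ[(fun ω => f (Xp 0 ω)) | pastSigmaAll Xp])
    -- the conditional minimax values `Z_k`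
    (Z : ℕ → Ω → ℝ)
    (hZmeas : ∀ k, Measurable[pastSigmaK Xp k] (Z k))
    (hZle : ∀ k, ∀ y : Ω → Y, Measurable[pastSigmaK Xp k] y →
      Z k ≤ᵐ[μ] μ[(fun ω => ⨆ lam : Λ, ∫ x, l (y ω) lam x ∂(Pinf ω : Measure X))
        | pastSigmaK Xp k])
    (hZatt : ∀ k, ∃ y : Ω → Y, Measurable[pastSigmaK Xp k] y ∧
      Z k =ᵐ[μ] μ[(fun ω => ⨆ lam : Λ, ∫ x, l (y ω) lam x ∂(Pinf ω : Measure X))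
        | pastSigmaK Xp k])
    -- the conditional maximin values `Z'_k`
    (Z' : ℕ → Ω → ℝ)
    (hZ'meas : ∀ k, Measurable[pastSigmaK Xp k] (Z' k))
    (hZ'ge : ∀ k, ∀ lamf : Ω → Λ, Measurable[pastSigmaK Xp k] lamf →
      μ[(fun ω => ⨅ y : Y, ∫ x, l y (lamf ω) x ∂(Pinf ω : Measure X))
        | pastSigmaK Xp k] ≤ᵐ[μ] Z' k)
    (hZ'att : ∀ k, ∃ lamf : Ω → Λ, Measurable[pastSigmaK Xp k] lamf ∧
      Z' k =ᵐ[μ] μ[(fun ω => ⨅ y : Y, ∫ x, l y (lamf ω) x ∂(Pinf ω : Measure X))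
        | pastSigmaK Xp k])
    -- the `F₋∞`-measurable saddle point `(y*∞, λ*∞)`
    (ystar : Ω → Y) (lamstar : Ω → Λ)
    (hystarm : Measurable[pastSigmaAll Xp] ystar)
    (hlamstarm : Measurable[pastSigmaAll Xp] lamstar)
    (hsaddle : ∀ᵐ ω ∂μ, ∀ (y : Y) (lam : Λ),
      (∫ x, l (ystar ω) lam x ∂(Pinf ω : Measure X))
          ≤ (∫ x, l (ystar ω) (lamstar ω) x ∂(Pinf ω : Measure X)) ∧
        (∫ x, l (ystar ω) (lamstar ω) x ∂(Pinf ω : Measure X))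
          ≤ ∫ x, l y (lamstar ω) x ∂(Pinf ω : Measure X)) :
    (∀ᵐ ω ∂μ, Tendsto (fun k => Z k ω) atTop
        (𝓝 (∫ x, l (ystar ω) (lamstar ω) x ∂(Pinf ω : Measure X)))) ∧
    (∀ᵐ ω ∂μ, Tendsto (fun k => Z' k ω) atTop
        (𝓝 (∫ x, l (ystar ω) (lamstar ω) x ∂(Pinf ω : Measure X)))) ∧
    Tendsto (fun k => ∫ ω, |Z k ω
        - ∫ x, l (ystar ω) (lamstar ω) x ∂(Pinf ω : Measure X)| ∂μ) atTop (𝓝 0) ∧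
    Tendsto (fun k => ∫ ω, |Z' k ω
        - ∫ x, l (ystar ω) (lamstar ω) x ∂(Pinf ω : Measure X)| ∂μ) atTop (𝓝 0) ∧
    Tendsto (fun k => ∫ ω, Z k ω ∂μ) atTop
      (𝓝 (∫ ω, (∫ x, l (ystar ω) (lamstar ω) x ∂(Pinf ω : Measure X)) ∂μ)) ∧
    Tendsto (fun k => ∫ ω, Z' k ω ∂μ) atTop
      (𝓝 (∫ ω, (∫ x, l (ystar ω) (lamstar ω) x ∂(Pinf ω : Measure X)) ∂μ)) :=
  stmt10_general μ Xp hXm l hl Pinf hPinf Z hZle hZatt Z' hZ'ge hZ'att ystar lamstar hystarm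
    hlamstarm hsaddle
end

section
/- Breiman's generalized ergodic theorem: Let X = (X_i)_{i∈ℤ} be a stationary ergodic process, T^i the left-shift by i places, and f_1, f_2, … a sequence of real-valued functions of the process such that f_n(X) → f(X) almost surely and E[sup_n |f_n(X)|] < ∞. Then (1/n) Σ_{i=1}^n f_i(T^i X) → E[f(X)] almost surely. -/
/-!
Garsia's argument: the maxima `M_n = max_{k ≤ n} S_k φ` of the Birkhoff sums satisfy
`M_n - M_n ∘ T ≤ φ` on `{M_n > 0}` and `M_n - M_n ∘ T ≤ 0` elsewhere, and `M_n - M_n ∘ T` has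
integral zero, which gives the maximal ergodic inequality `∫_{∃ n, S_n φ > 0} φ ≥ 0`.

If `∫ φ < c`, the set where the Birkhoff sums of `φ - c` are bounded above is exactly
`T`-invariant, hence null or conull; were it null, the maximal inequality would give
`∫ (φ - c) ≥ 0`. So `S_n φ ≤ c n + O(1)` almost surely.

For Breiman's theorem, bound `f_i` for `i ≥ N` by the tail supremum `G_N = sup_{k ≥ N} f_k`:
the first `N` terms only contribute `O(1)`, and `∫ G_N → ∫ f` by dominated convergence, so the
averages have `limsup ≤ ∫ f`. Applying this to `-f_n` gives the lower bound.
-/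

open MeasureTheory Filter Topology Finset

section PartialSups

variable {α : Type*} [MeasurableSpace α] {μ : Measure α}

theorem Measurable.partialSups {β : Type*} [MeasurableSpace β] [Lattice β] [MeasurableSup₂ β]
    {f : ℕ → α → β} (hf : ∀ n, Measurable (f n)) (n : ℕ) :
    Measurable (partialSups f n) := by
  induction n with
  | zero => simpa using hf 0
  | succ n ih => simpa [partialSups_succ] using ih.sup (hf (n + 1))

theorem MeasureTheory.Integrable.partialSups {β : Type*}
    [NormedAddCommGroup β] [Lattice β] [HasSolidNorm β] [IsOrderedAddMonoid β]
    {f : ℕ → α → β} (hf : ∀ n, Integrable (f n) μ) (n : ℕ) :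
    Integrable (partialSups f n) μ := by
  induction n with
  | zero => simpa using hf 0
  | succ n ih => simpa [partialSups_succ] using ih.sup (hf (n + 1))

end PartialSups

section BirkhoffSum

variable {α : Type*} [MeasurableSpace α] {μ : Measure α} {T : α → α} {φ : α → ℝ}

theorem Measurable.birkhoffSum (hT : Measurable T) (hφ : Measurable φ) (n : ℕ) :
    Measurable (birkhoffSum T φ n) :=
  Finset.measurable_sum _ fun i _ => hφ.comp (hT.iterate i)

theorem MeasureTheory.MeasurePreserving.integrable_birkhoffSum (hT : MeasurePreserving T μ μ)
    (hφ : Integrable φ μ) (n : ℕ) : Integrable (birkhoffSum T φ n) μ :=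
  integrable_finsetSum _ fun i _ => (hT.iterate i).integrable_comp_of_integrable hφ

end BirkhoffSum

section Maximal

variable {α : Type*}

theorem partialSups_birkhoffSum_nonneg (T : α → α) (φ : α → ℝ) (n : ℕ) (x : α) :
    0 ≤ partialSups (birkhoffSum T φ) n x := by
  rw [Pi.partialSups_apply]
  exact (birkhoffSum_zero T φ x).symm.le.trans
    (le_partialSups_of_le (birkhoffSum T φ · x) (Nat.zero_le n))

theorem partialSups_birkhoffSum_le (T : α → α) (φ : α → ℝ) (n : ℕ) (x : α) :
    partialSups (birkhoffSum T φ) n x ≤ max 0 (φ x + partialSups (birkhoffSum T φ) n (T x)) := by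
  rw [Pi.partialSups_apply, Pi.partialSups_apply]
  refine partialSups_le _ _ _ fun k hk => ?_
  cases k with
  | zero => exact (birkhoffSum_zero T φ x).le.trans (le_max_left _ _)
  | succ k =>
    rw [birkhoffSum_succ']
    exact le_max_of_le_right <|
      add_le_add_right (le_partialSups_of_le (birkhoffSum T φ · (T x)) (by omega : k ≤ n)) _

theorem partialSups_birkhoffSum_sub_comp_le_indicator (T : α → α) (φ : α → ℝ) (n : ℕ) (x : α) :
    partialSups (birkhoffSum T φ) n x - partialSups (birkhoffSum T φ) n (T x) ≤
      {y | 0 < partialSups (birkhoffSum T φ) n y}.indicator φ x := by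
  have hTx := partialSups_birkhoffSum_nonneg T φ n (T x)
  simp only [Set.indicator_apply, Set.mem_ofPred_eq]
  split_ifs with hx
  · rcases le_max_iff.1 (partialSups_birkhoffSum_le T φ n x) with h | h <;> linarith
  · linarith

variable [MeasurableSpace α] {μ : Measure α} {T : α → α} {φ : α → ℝ}

theorem MeasureTheory.MeasurePreserving.setIntegral_partialSups_birkhoffSum_pos_nonneg
    (hT : MeasurePreserving T μ μ) (hφm : Measurable φ) (hφ : Integrable φ μ) (n : ℕ) :
    0 ≤ ∫ x in {x | 0 < partialSups (birkhoffSum T φ) n x}, φ x ∂μ := by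
  set M := partialSups (birkhoffSum T φ) n
  have hMm : Measurable M := Measurable.partialSups (hT.measurable.birkhoffSum hφm) n
  have hMi : Integrable M μ := Integrable.partialSups (hT.integrable_birkhoffSum hφ) n
  have hMTi : Integrable (fun x => M (T x)) μ := hT.integrable_comp_of_integrable hMi
  have hMT : ∫ x, M (T x) ∂μ = ∫ x, M x ∂μ := by
    rw [← integral_map hT.measurable.aemeasurable hMm.aestronglyMeasurable, hT.map_eq]
  rw [← integral_indicator (measurableSet_lt measurable_const hMm)]
  calc (0 : ℝ) = ∫ x, (M x - M (T x)) ∂μ := by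
        rw [integral_sub hMi hMTi, hMT, sub_self]
    _ ≤ _ := integral_mono (hMi.sub hMTi)
        (hφ.indicator (measurableSet_lt measurable_const hMm))
        (partialSups_birkhoffSum_sub_comp_le_indicator T φ n)

theorem MeasureTheory.MeasurePreserving.setIntegral_exists_birkhoffSum_pos_nonneg
    (hT : MeasurePreserving T μ μ) (hφm : Measurable φ) (hφ : Integrable φ μ) :
    0 ≤ ∫ x in {x | ∃ n, 0 < birkhoffSum T φ n x}, φ x ∂μ := by
  set A : ℕ → Set α := fun n => {x | 0 < partialSups (birkhoffSum T φ) n x}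
  have hA : ⋃ n, A n = {x | ∃ n, 0 < birkhoffSum T φ n x} := by
    ext x
    simp only [A, Set.mem_iUnion, Set.mem_ofPred_eq, Pi.partialSups_apply]
    constructor
    · rintro ⟨n, hn⟩
      obtain ⟨k, -, hk⟩ := exists_partialSups_eq (birkhoffSum T φ · x) n
      exact ⟨k, hk ▸ hn⟩
    · rintro ⟨n, hn⟩
      exact ⟨n, hn.trans_le (le_partialSups (birkhoffSum T φ · x) n)⟩
  have hAm n : MeasurableSet (A n) := measurableSet_lt measurable_const
    (Measurable.partialSups (hT.measurable.birkhoffSum hφm) n)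
  rw [← hA]
  exact ge_of_tendsto' (tendsto_setIntegral_of_monotone hAm
    (fun m n hmn x hx => hx.trans_le (partialSups_monotone (birkhoffSum T φ) hmn x))
    hφ.integrableOn) (hT.setIntegral_partialSups_birkhoffSum_pos_nonneg hφm hφ)

end Maximal

section Ergodic

variable {α : Type*} {T : α → α} {φ : α → ℝ}

theorem bddAbove_range_birkhoffSum_apply_iff (x : α) :
    BddAbove (Set.range fun n => birkhoffSum T φ n (T x)) ↔
      BddAbove (Set.range fun n => birkhoffSum T φ n x) := by
  simp only [bddAbove_def, Set.forall_mem_range]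
  constructor
  · rintro ⟨K, hK⟩
    refine ⟨max 0 (φ x + K), fun n => ?_⟩
    cases n with
    | zero => simp
    | succ n => exact le_max_of_le_right (by rw [birkhoffSum_succ']; linarith [hK n])
  · rintro ⟨K, hK⟩
    exact ⟨K - φ x, fun n => by linarith [hK (n + 1), birkhoffSum_succ' T φ n x]⟩

variable [MeasurableSpace α] {μ : Measure α} [IsProbabilityMeasure μ]

theorem Ergodic.ae_exists_birkhoffSum_le (hT : Ergodic T μ) (hφm : Measurable φ)
    (hφ : Integrable φ μ) {c : ℝ} (hc : ∫ x, φ x ∂μ < c) :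
    ∀ᵐ x ∂μ, ∃ K, ∀ n : ℕ, birkhoffSum T φ n x ≤ c * n + K := by
  set ψ : α → ℝ := fun x => φ x - c
  have hψm : Measurable ψ := hφm.sub measurable_const
  have hψ : Integrable ψ μ := hφ.sub (integrable_const c)
  have hSψ n x : birkhoffSum T ψ n x = birkhoffSum T φ n x - n * c := by
    simp [ψ, birkhoffSum, Finset.sum_sub_distrib]
  set B := {x | BddAbove (Set.range fun n => birkhoffSum T ψ n x)}
  have hB : MeasurableSet B := measurableSet_bddAbove_range (hT.measurable.birkhoffSum hψm)
  have hTB : T ⁻¹' B = B := Set.ext fun x => bddAbove_range_birkhoffSum_apply_iff x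
  rcases hT.ae_mem_or_ae_notMem hB hTB with hbdd | hunbdd
  · filter_upwards [hbdd] with x ⟨K, hK⟩
    exact ⟨K, fun n => by linarith [hK ⟨n, rfl⟩, hSψ n x]⟩
  · have hpos : ∀ᵐ x ∂μ, x ∈ {x | ∃ n, 0 < birkhoffSum T ψ n x} := by
      filter_upwards [hunbdd] with x hx
      simp only [B, Set.mem_ofPred_eq, not_bddAbove_iff, Set.exists_range_iff] at hx
      exact hx 0
    have := hT.toMeasurePreserving.setIntegral_exists_birkhoffSum_pos_nonneg hψm hψ
    rw [setIntegral_eq_integral_of_ae_compl_eq_zero (hpos.mono fun x hx hx' => absurd hx hx'),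
      integral_sub hφ (integrable_const c)] at this
    simp only [integral_const, probReal_univ, smul_eq_mul, one_mul] at this
    linarith

end Ergodic

theorem Filter.Tendsto.iSup_nat_add {u : ℕ → ℝ} {a : ℝ} (hu : Tendsto u atTop (𝓝 a)) :
    Tendsto (fun N => ⨆ k, u (N + k)) atTop (𝓝 a) := by
  have hbdd N : BddAbove (Set.range fun k => u (N + k)) :=
    hu.bddAbove_range.mono (Set.range_comp_subset_range _ u)
  refine tendsto_order.2 ⟨fun b hb => ?_, fun b hb => ?_⟩
  · filter_upwards [(tendsto_order.1 hu).1 b hb] with N hN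
    exact hN.trans_le (by simpa using le_ciSup (hbdd N) 0)
  · obtain ⟨b', hab', hb'b⟩ := exists_between hb
    obtain ⟨N₀, hN₀⟩ := eventually_atTop.1 ((tendsto_order.1 hu).2 b' hab')
    filter_upwards [eventually_ge_atTop N₀] with N hN
    exact (ciSup_le fun k => (hN₀ (N + k) (by omega)).le).trans_lt hb'b

theorem Finset.sum_le_sum_range_max_zero_of_nonpos {d : ℕ → ℝ} {N : ℕ}
    (hd : ∀ i, N ≤ i → d i ≤ 0) (s : Finset ℕ) :
    ∑ i ∈ s, d i ≤ ∑ i ∈ range N, max (d i) 0 :=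
  calc ∑ i ∈ s, d i ≤ ∑ i ∈ s, if i < N then max (d i) 0 else 0 := by
        refine sum_le_sum fun i _ => ?_
        split_ifs with hi
        · exact le_max_left _ _
        · exact hd i (not_lt.1 hi)
    _ = ∑ i ∈ s.filter (· < N), max (d i) 0 := (sum_filter _ _).symm
    _ ≤ ∑ i ∈ range N, max (d i) 0 :=
        sum_le_sum_of_subset_of_nonneg (fun i hi => by simpa using (mem_filter.1 hi).2)
          fun i _ _ => le_max_right _ _

theorem birkhoffSum_apply_eq_sum_Icc {α : Type*} (T : α → α) (φ : α → ℝ) (n : ℕ) (x : α) :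
    birkhoffSum T φ n (T x) = ∑ i ∈ Icc 1 n, φ (T^[i] x) := by
  rw [birkhoffSum, ← Ico_add_one_right_eq_Icc, sum_Ico_eq_sum_range, Nat.add_sub_cancel]
  exact sum_congr rfl fun i _ => by rw [add_comm, Function.iterate_succ_apply]

section Breiman

variable {α : Type*} [MeasurableSpace α] {μ : Measure α} [IsProbabilityMeasure μ] {T : α → α}

theorem Ergodic.ae_exists_sum_Icc_le_of_tendsto (hT : Ergodic T μ) {f : ℕ → α → ℝ}
    {flim : α → ℝ} (hfm : ∀ n, Measurable (f n))
    (hconv : ∀ᵐ x ∂μ, Tendsto (fun n => f n x) atTop (𝓝 (flim x)))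
    {g : α → ℝ} (hg : Integrable g μ) (hfg : ∀ n x, |f n x| ≤ g x)
    {c : ℝ} (hc : ∫ x, flim x ∂μ < c) :
    ∀ᵐ x ∂μ, ∃ K, ∀ n : ℕ, ∑ i ∈ Icc 1 n, f i (T^[i] x) ≤ c * n + K := by
  have hbdd N x : BddAbove (Set.range fun k => f (N + k) x) :=
    ⟨g x, Set.forall_mem_range.2 fun k => le_of_abs_le (hfg _ x)⟩
  set G : ℕ → α → ℝ := fun N x => ⨆ k, f (N + k) x
  have hGm N : Measurable (G N) := Measurable.iSup fun k => hfm (N + k)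
  have hfG {N i} (hi : N ≤ i) x : f i x ≤ G N x := by
    simpa [Nat.add_sub_cancel' hi] using le_ciSup (hbdd N x) (i - N)
  have hGg N x : |G N x| ≤ g x :=
    abs_le.2 ⟨(neg_le_of_abs_le (hfg N x)).trans (hfG le_rfl x),
      ciSup_le fun k => le_of_abs_le (hfg _ x)⟩
  have hGi N : Integrable (G N) μ :=
    hg.mono' (hGm N).aestronglyMeasurable (ae_of_all _ fun x => hGg N x)
  have hGlim : Tendsto (fun N => ∫ x, G N x ∂μ) atTop (𝓝 (∫ x, flim x ∂μ)) :=
    tendsto_integral_of_dominated_convergence g (fun N => (hGm N).aestronglyMeasurable) hg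
      (fun N => ae_of_all _ fun x => hGg N x) (hconv.mono fun x hx => hx.iSup_nat_add)
  obtain ⟨N, hN⟩ := ((tendsto_order.1 hGlim).2 c hc).exists
  have hB := hT.toMeasurePreserving.quasiMeasurePreserving.ae
    (hT.ae_exists_birkhoffSum_le (hGm N) (hGi N) hN)
  filter_upwards [hB] with x ⟨K, hK⟩
  refine ⟨K + ∑ i ∈ range N, max (f i (T^[i] x) - G N (T^[i] x)) 0, fun n => ?_⟩
  have htail := sum_le_sum_range_max_zero_of_nonpos
    (d := fun i => f i (T^[i] x) - G N (T^[i] x)) (fun i hi => sub_nonpos.2 (hfG hi _)) (Icc 1 n)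
  rw [sum_sub_distrib, ← birkhoffSum_apply_eq_sum_Icc] at htail
  linarith [hK n]

end Breiman

theorem MeasureTheory.ae_eventually_one_div_mul_lt_of_le_mul_add {α : Type*}
    [MeasurableSpace α] {μ : Measure α} {u : ℕ → α → ℝ} {L : ℝ}
    (h : ∀ c, L < c → ∀ᵐ x ∂μ, ∃ K, ∀ n : ℕ, u n x ≤ c * n + K) :
    ∀ᵐ x ∂μ, ∀ b, L < b → ∀ᶠ n : ℕ in atTop, 1 / (n : ℝ) * u n x < b := by
  have hk (k : ℕ) : L < L + 1 / (k + 1) := lt_add_of_pos_right L Nat.one_div_pos_of_nat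
  filter_upwards [ae_all_iff.2 fun k => h _ (hk k)] with x hx b hb
  obtain ⟨k, hkb⟩ := exists_nat_one_div_lt (sub_pos.2 hb)
  obtain ⟨K, hK⟩ := hx k
  have hlim : Tendsto (fun n : ℕ => L + 1 / (k + 1) + K / n) atTop (𝓝 (L + 1 / (k + 1))) := by
    simpa using tendsto_const_nhds.add (tendsto_const_div_atTop_nhds_zero_nat K)
  filter_upwards [(tendsto_order.1 hlim).2 b (by linarith), eventually_gt_atTop 0] with n hn hn0
  calc 1 / (n : ℝ) * u n x ≤ 1 / n * ((L + 1 / (k + 1)) * n + K) := by gcongr; exact hK n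
    _ = L + 1 / (k + 1) + K / n := by field_simp
    _ < b := hn

theorem stmt12_general {Ω : Type*} [MeasurableSpace Ω]
    (μ : Measure Ω) [IsProbabilityMeasure μ]
    (T : Ω → Ω) (hT : Ergodic T μ)
    (f : ℕ → Ω → ℝ) (flim : Ω → ℝ)
    (hfm : ∀ n, Measurable (f n))
    (hconv : ∀ᵐ ω ∂μ, Tendsto (fun n => f n ω) atTop (𝓝 (flim ω)))
    (henv : ∃ g : Ω → ℝ, Integrable g μ ∧ ∀ n ω, |f n ω| ≤ g ω) :
    ∀ᵐ ω ∂μ, Tendsto (fun n : ℕ =>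
        (1 / (n : ℝ)) * ∑ i ∈ Finset.Icc 1 n, f i (T^[i] ω))
      atTop (𝓝 (∫ ω, flim ω ∂μ)) := by
  obtain ⟨g, hg, hfg⟩ := henv
  have upper := ae_eventually_one_div_mul_lt_of_le_mul_add fun c hc =>
    hT.ae_exists_sum_Icc_le_of_tendsto hfm hconv hg hfg hc
  have lower := ae_eventually_one_div_mul_lt_of_le_mul_add (L := -∫ ω, flim ω ∂μ) fun c hc =>
    hT.ae_exists_sum_Icc_le_of_tendsto (fun n => (hfm n).neg) (hconv.mono fun ω h => h.neg) hg
      (fun n ω => (abs_neg (f n ω)).trans_le (hfg n ω)) (by rwa [integral_neg])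
  filter_upwards [upper, lower] with ω hup hlow
  refine tendsto_order.2 ⟨fun b hb => ?_, hup⟩
  filter_upwards [hlow (-b) (neg_lt_neg hb)] with n hn
  simp only [Pi.neg_apply, sum_neg_distrib, mul_neg] at hn
  linarith

/-- Breiman's generalized ergodic theorem: for an ergodic measure-preserving shift `T`,
measurable functionals `f_n → f` a.s. with an integrable envelope,
`(1/n) Σ_{i=1}^n f_i(T^i ω) → E[f]` almost surely. -/
theorem stmt12 {Ω : Type*} [MeasurableSpace Ω]
    (μ : Measure Ω) [IsProbabilityMeasure μ]
    (T : Ω → Ω) (hT : Ergodic T μ)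
    (f : ℕ → Ω → ℝ) (flim : Ω → ℝ)
    (hfm : ∀ n, Measurable (f n)) (hflimm : Measurable flim)
    (hconv : ∀ᵐ ω ∂μ, Tendsto (fun n => f n ω) atTop (𝓝 (flim ω)))
    (henv : ∃ g : Ω → ℝ, Integrable g μ ∧ ∀ n ω, |f n ω| ≤ g ω) :
    ∀ᵐ ω ∂μ, Tendsto (fun n : ℕ =>
        (1 / (n : ℝ)) * ∑ i ∈ Finset.Icc 1 n, f i (T^[i] ω))
      atTop (𝓝 (∫ ω, flim ω ∂μ)) :=
  stmt12_general μ T hT f flim hfm hconv henv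
end

section
/- In the setting of the MHA optimality theorem, suppose (1/N) Σ_{i=1}^N l(y_i, λ_i, X_i) → V* a.s. and (1/N) Σ_{i=1}^N l(y_i, λ*∞, X_i) → V* a.s., where l(y, λ, x) = u(y, x) + λ(c(y, x) − γ). Suppose further the λ-regret bound implies limsup_N (1/N) Σ_i λ_max(c(y_i, X_i) − γ) ≤ limsup_N (1/N) Σ_i λ_i(c(y_i, X_i) − γ). Then limsup_N (1/N) Σ_{i=1}^N λ_max (c(y_i, X_i) − γ) ≤ limsup_N (1/N) Σ_{i=1}^N λ*∞ (c(y_i, X_i) − γ), and since 0 ≤ λ*∞ < λ_max, it follows that limsup_N (1/N) Σ_{i=1}^N c(y_i, X_i) ≤ γ almost surely. -/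
open Filter Topology

private lemma limsup_const_mul_aux {f : ℕ → ℝ} {a : ℝ} (ha : 0 ≤ a)
    (hb : Filter.IsBoundedUnder (· ≤ ·) atTop f)
    (hc : Filter.IsCoboundedUnder (· ≤ ·) atTop f) :
    Filter.limsup (fun i => a * f i) atTop = a * Filter.limsup f atTop :=
  (Monotone.map_limsSup_of_continuousAt (F := (atTop : Filter ℕ).map f)
    (f := fun x : ℝ => a * x)
    (fun _ _ h => mul_le_mul_of_nonneg_left h ha)
    (continuous_mul_left a).continuousAt hb hc).symm

/-- γ-boundedness of MHA: if the average Lagrangian losses with the played duals `λ_i` and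
with the optimal dual `λ*∞` both converge to `V*`, and the λ-regret bound compares the
constant expert `λ_max` to the played duals, then
`limsup (1/N) Σ λ_max (c(y_i, X_i) − γ) ≤ limsup (1/N) Σ λ*∞ (c(y_i, X_i) − γ)`, and since
`0 ≤ λ*∞ < λ_max`, the average constraint loss satisfies `limsup (1/N) Σ c(y_i, X_i) ≤ γ`. -/
theorem stmt15 {X Y : Type*}
    [MetricSpace X] [CompactSpace X]
    [MetricSpace Y] [CompactSpace Y]
    (u c : Y → X → ℝ)
    (hu : Continuous fun p : Y × X => u p.1 p.2)
    (hc : Continuous fun p : Y × X => c p.1 p.2)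
    (γ lammax lamstar : ℝ) (hγ : 0 < γ)
    (hlam0 : 0 ≤ lamstar) (hlamlt : lamstar < lammax)
    (y : ℕ → Y) (lam : ℕ → ℝ) (hlam : ∀ i, lam i ∈ Set.Icc (0 : ℝ) lammax)
    (x : ℕ → X) (V : ℝ)
    (h1 : Tendsto (fun N : ℕ => (1 / (N : ℝ)) * ∑ i ∈ Finset.Icc 1 N,
        (u (y i) (x i) + lam i * (c (y i) (x i) - γ))) atTop (𝓝 V))
    (h2 : Tendsto (fun N : ℕ => (1 / (N : ℝ)) * ∑ i ∈ Finset.Icc 1 N,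
        (u (y i) (x i) + lamstar * (c (y i) (x i) - γ))) atTop (𝓝 V))
    (h3 : Filter.limsup (fun N : ℕ => (1 / (N : ℝ)) * ∑ i ∈ Finset.Icc 1 N,
          lammax * (c (y i) (x i) - γ)) atTop
      ≤ Filter.limsup (fun N : ℕ => (1 / (N : ℝ)) * ∑ i ∈ Finset.Icc 1 N,
          lam i * (c (y i) (x i) - γ)) atTop) :
    (Filter.limsup (fun N : ℕ => (1 / (N : ℝ)) * ∑ i ∈ Finset.Icc 1 N,
          lammax * (c (y i) (x i) - γ)) atTop
      ≤ Filter.limsup (fun N : ℕ => (1 / (N : ℝ)) * ∑ i ∈ Finset.Icc 1 N,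
          lamstar * (c (y i) (x i) - γ)) atTop) ∧
    Filter.limsup (fun N : ℕ => (1 / (N : ℝ)) * ∑ i ∈ Finset.Icc 1 N,
        c (y i) (x i)) atTop ≤ γ := by
  -- base sequence
  set g : ℕ → ℝ := fun N => (1 / (N : ℝ)) * ∑ i ∈ Finset.Icc 1 N, (c (y i) (x i) - γ) with hg
  -- a uniform bound on |c|
  have hne : (Set.univ : Set (Y × X)).Nonempty := ⟨(y 0, x 0), trivial⟩
  obtain ⟨p₀, -, hM⟩ := isCompact_univ.exists_isMaxOn hne
    ((continuous_abs.comp hc).continuousOn)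
  set M : ℝ := |c p₀.1 p₀.2| with hMdef
  have hM' : ∀ i : ℕ, |c (y i) (x i)| ≤ M := fun i => hM (Set.mem_univ ((y i, x i) : Y × X))
  have hM0 : 0 ≤ M := le_trans (abs_nonneg _) (hM' 0)
  -- |g N| ≤ M + γ
  have hgb : ∀ N, |g N| ≤ M + γ := by
    intro N
    rcases Nat.eq_zero_or_pos N with rfl | hN
    · simp [hg]; linarith
    · have hcard : (Finset.Icc 1 N).card = N := by simp
      have habs : |∑ i ∈ Finset.Icc 1 N, (c (y i) (x i) - γ)| ≤ (N : ℝ) * (M + γ) := by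
        calc |∑ i ∈ Finset.Icc 1 N, (c (y i) (x i) - γ)|
            ≤ ∑ i ∈ Finset.Icc 1 N, |c (y i) (x i) - γ| := Finset.abs_sum_le_sum_abs _ _
          _ ≤ ∑ i ∈ Finset.Icc 1 N, (M + γ) := by
              refine Finset.sum_le_sum fun i _ => ?_
              calc |c (y i) (x i) - γ| ≤ |c (y i) (x i)| + |γ| := abs_sub _ _
                _ ≤ M + γ := by have := hM' i; rw [abs_of_pos hγ]; linarith
          _ = (N : ℝ) * (M + γ) := by rw [Finset.sum_const, hcard, nsmul_eq_mul]
      have hNpos : (0 : ℝ) < N := by exact_mod_cast hN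
      rw [hg]
      rw [abs_mul, abs_of_pos (by positivity : (0:ℝ) < 1 / (N:ℝ))]
      calc (1 / (N : ℝ)) * |∑ i ∈ Finset.Icc 1 N, (c (y i) (x i) - γ)|
          ≤ (1 / (N : ℝ)) * ((N : ℝ) * (M + γ)) := by
            exact mul_le_mul_of_nonneg_left habs (by positivity)
        _ = M + γ := by field_simp
  have hg_above : Filter.IsBoundedUnder (· ≤ ·) atTop g :=
    isBoundedUnder_of ⟨M + γ, fun N => le_trans (le_abs_self _) (hgb N)⟩
  have hg_below : Filter.IsBoundedUnder (· ≥ ·) atTop g :=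
    isBoundedUnder_of ⟨-(M + γ), fun N => neg_le_of_abs_le (hgb N)⟩
  have hg_cob : Filter.IsCoboundedUnder (· ≤ ·) atTop g := hg_below.isCoboundedUnder_le
  -- rewrite the λmax and λ* sequences as constant multiples of g
  have hmaxeq : (fun N : ℕ => (1 / (N : ℝ)) * ∑ i ∈ Finset.Icc 1 N,
      lammax * (c (y i) (x i) - γ)) = fun N => lammax * g N := by
    funext N; rw [hg, ← Finset.mul_sum]; ring
  have hstareq : (fun N : ℕ => (1 / (N : ℝ)) * ∑ i ∈ Finset.Icc 1 N,
      lamstar * (c (y i) (x i) - γ)) = fun N => lamstar * g N := by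
    funext N; rw [hg, ← Finset.mul_sum]; ring
  set L : ℝ := Filter.limsup g atTop with hL
  have hmaxls : Filter.limsup (fun N : ℕ => (1 / (N : ℝ)) * ∑ i ∈ Finset.Icc 1 N,
      lammax * (c (y i) (x i) - γ)) atTop = lammax * L := by
    rw [hmaxeq]
    exact limsup_const_mul_aux (le_trans hlam0 hlamlt.le) hg_above hg_cob
  have hstarls : Filter.limsup (fun N : ℕ => (1 / (N : ℝ)) * ∑ i ∈ Finset.Icc 1 N,
      lamstar * (c (y i) (x i) - γ)) atTop = lamstar * L := by
    rw [hstareq]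
    exact limsup_const_mul_aux hlam0 hg_above hg_cob
  -- the difference sequence tends to 0
  set d : ℕ → ℝ := fun N => (1 / (N : ℝ)) * ∑ i ∈ Finset.Icc 1 N,
      (u (y i) (x i) + lam i * (c (y i) (x i) - γ))
    - (1 / (N : ℝ)) * ∑ i ∈ Finset.Icc 1 N,
      (u (y i) (x i) + lamstar * (c (y i) (x i) - γ)) with hd
  have hd0 : Tendsto d atTop (𝓝 0) := by
    simpa only [sub_self] using h1.sub h2
  have hdecomp : (fun N : ℕ => (1 / (N : ℝ)) * ∑ i ∈ Finset.Icc 1 N,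
      lam i * (c (y i) (x i) - γ)) = (fun N => lamstar * g N) + d := by
    funext N
    simp only [hd, hg, Pi.add_apply]
    rw [Finset.sum_add_distrib, Finset.sum_add_distrib, ← Finset.mul_sum]
    ring
  -- limsup of the played-dual sequence is at most lamstar * L
  have hkey : Filter.limsup (fun N : ℕ => (1 / (N : ℝ)) * ∑ i ∈ Finset.Icc 1 N,
      lam i * (c (y i) (x i) - γ)) atTop ≤ lamstar * L := by
    rw [hdecomp]
    have hsb_below : Filter.IsBoundedUnder (· ≥ ·) atTop (fun N => lamstar * g N) :=
      isBoundedUnder_of ⟨lamstar * -(M + γ), fun N =>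
        mul_le_mul_of_nonneg_left (neg_le_of_abs_le (hgb N)) hlam0⟩
    have hsb_above : Filter.IsBoundedUnder (· ≤ ·) atTop (fun N => lamstar * g N) :=
      isBoundedUnder_of ⟨lamstar * (M + γ), fun N =>
        mul_le_mul_of_nonneg_left (le_trans (le_abs_self _) (hgb N)) hlam0⟩
    have hd_above : Filter.IsBoundedUnder (· ≤ ·) atTop d := hd0.isBoundedUnder_le
    have hd_cob : Filter.IsCoboundedUnder (· ≤ ·) atTop d :=
      hd0.isBoundedUnder_ge.isCoboundedUnder_le
    have hls := limsup_add_le hsb_below hsb_above hd_cob hd_above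
    have hdls : Filter.limsup d atTop = 0 := hd0.limsup_eq
    calc Filter.limsup ((fun N => lamstar * g N) + d) atTop
        ≤ Filter.limsup (fun N => lamstar * g N) atTop + Filter.limsup d atTop := hls
      _ = lamstar * L := by
          rw [hdls, add_zero, limsup_const_mul_aux hlam0 hg_above hg_cob]
  have part1 : Filter.limsup (fun N : ℕ => (1 / (N : ℝ)) * ∑ i ∈ Finset.Icc 1 N,
        lammax * (c (y i) (x i) - γ)) atTop
      ≤ Filter.limsup (fun N : ℕ => (1 / (N : ℝ)) * ∑ i ∈ Finset.Icc 1 N,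
        lamstar * (c (y i) (x i) - γ)) atTop := by
    rw [hstarls]
    exact le_trans h3 hkey
  refine ⟨part1, ?_⟩
  -- from lammax * L ≤ lamstar * L and lamstar < lammax, get L ≤ 0
  have hL0 : L ≤ 0 := by
    have := part1
    rw [hmaxls, hstarls] at this
    nlinarith
  -- conclude
  have heq : ∀ᶠ N : ℕ in atTop, (1 / (N : ℝ)) * ∑ i ∈ Finset.Icc 1 N,
      c (y i) (x i) = g N + γ := by
    filter_upwards [eventually_ge_atTop 1] with N hN
    have hcard : (Finset.Icc 1 N).card = N := by simp
    have hNpos : (0 : ℝ) < N := by exact_mod_cast hN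
    have hsum : ∑ i ∈ Finset.Icc 1 N, (c (y i) (x i) - γ)
        = (∑ i ∈ Finset.Icc 1 N, c (y i) (x i)) - (N : ℝ) * γ := by
      rw [Finset.sum_sub_distrib, Finset.sum_const, hcard, nsmul_eq_mul]
    simp only [hg]
    rw [hsum]
    field_simp
    ring
  calc Filter.limsup (fun N : ℕ => (1 / (N : ℝ)) * ∑ i ∈ Finset.Icc 1 N,
        c (y i) (x i)) atTop
      = Filter.limsup (fun N => g N + γ) atTop := limsup_congr heq
    _ = L + γ := limsup_add_const atTop g γ hg_above hg_cob
    _ ≤ γ := by linarith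
end

section
/- Weak Aggregating Algorithm regret bound (as used in MHA): Let l be a loss function on Y × Λ × X with values in a bounded interval, convex in its first argument, and let experts indexed by a countable set output points y^i_{k,h} ∈ Y at each round i. If the learner plays the weighted average y_n = Σ_{k,h} p_n^{(k,h)} y^n_{k,h} with weights p_n^{(k,h)} ∝ α_{k,h} exp(−(1/√n) Σ_{i≤n−1} l(y^i_{k,h}, λ_i, x_i)) for a prior (α_{k,h}) with Σ α_{k,h} = 1 and α_{k,h} > 0, then for every expert (k, h) and every N, (1/N) Σ_{i=1}^N l(y_i, λ_i, x_i) ≤ (1/N) Σ_{i=1}^N l(y^i_{k,h}, λ_i, x_i) + C_{k,h}/√N, where C_{k,h} depends only on the loss bound and α_{k,h}. -/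
/-!
By Jensen's inequality, in its infinite form for a convex function that is bounded above on a
closed convex set, the learner's loss in round `n` is at most the expected expert loss under the
exponential weights. Shift the losses into `[0, B]`, `B = b - a`, and compare with the mix loss
`Φₙ = -(1/ηₙ) log ∑ₚ αₚ exp (-ηₙ Lₙ(p))` of the cumulative losses `Lₙ`. The bound
`exp (-v) ≤ 1 - v + v²` gives `E[loss] ≤ Φ(L + loss, η) - Φ(L, η) + η B²`, and the mix loss is
nonincreasing in the learning rate (a power-mean inequality), so one may pass from `ηₙ` to
`ηₙ₊₁ ≤ ηₙ`. Telescoping, `∑ₙ ηₙ ≤ 3 √N` and `Φ_N ≤ L_N(p) - √N log αₚ` give the claim with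
`C = 3 B² - log αₚ`.
-/

open Filter Topology
open scoped Pointwise

section InfiniteJensen

variable {E ι : Type*} [AddCommGroup E] [Module ℝ E] [TopologicalSpace E] [ContinuousSMul ℝ E]
  [T2Space E] {Y : Set E} {q : ι → ℝ} {z : ι → E}

theorem Convex.mem_smul_of_hasSum (hY : Convex ℝ Y) (hYc : IsClosed Y) (hYne : Y.Nonempty)
    (hq : ∀ i, 0 ≤ q i) {t : ℝ} (hqt : HasSum q t) (hz : ∀ i, z i ∈ Y) {T : E}
    (hT : HasSum (fun i => q i • z i) T) : T ∈ t • Y := by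
  rcases (hqt.nonneg hq).eq_or_lt with rfl | ht
  · have hq0 : q = 0 := (hasSum_zero_iff_of_nonneg hq).1 hqt
    rw [Set.zero_smul_set hYne, Set.mem_zero]
    exact hT.unique (by simp [hq0])
  · rw [Set.mem_smul_set_iff_inv_smul_mem₀ ht.ne']
    have hmass : Tendsto (fun F : Finset ι => F.centerMass q z) atTop (𝓝 (t⁻¹ • T)) :=
      (Tendsto.inv₀ hqt ht.ne').smul hT
    refine hYc.mem_of_tendsto hmass ?_
    filter_upwards [hqt (Ioi_mem_nhds ht)] with F hF
    exact hY.centerMass_mem (fun i _ => hq i) hF (fun i _ => hz i)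

theorem ConvexOn.map_hasSum_le [IsTopologicalAddGroup E] {f : E → ℝ} (hf : ConvexOn ℝ Y f)
    (hYc : IsClosed Y) {b : ℝ} (hfb : ∀ u ∈ Y, f u ≤ b) (hq : ∀ i, 0 ≤ q i) (hq1 : HasSum q 1)
    (hz : ∀ i, z i ∈ Y) {S : E} (hS : HasSum (fun i => q i • z i) S) {A : ℝ}
    (hA : HasSum (fun i => q i * f (z i)) A) : f S ≤ A := by
  -- `f` need not be lower semicontinuous, so one cannot pass to the limit along finite convex
  -- combinations; instead `S` is split exactly into the centre of mass of a finite part and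
  -- the normalised tail, which lies in `Y` and whose weight `1 - s` tends to `0`.
  have hsplit : ∀ᶠ F : Finset ι in atTop,
      f S ≤ ∑ i ∈ F, q i * f (z i) + (1 - ∑ i ∈ F, q i) * b := by
    filter_upwards [hq1 (Ioi_mem_nhds one_pos)] with F (hs : 0 < ∑ i ∈ F, q i)
    set s := ∑ i ∈ F, q i
    have hc : F.centerMass q z ∈ Y := hf.1.centerMass_mem (fun i _ => hq i) hs (fun i _ => hz i)
    have htail_q := (F.hasSum_iff_compl).1 hq1
    obtain ⟨u, hu, htail : (1 - s) • u = _⟩ :=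
      hf.1.mem_smul_of_hasSum (q := fun i : {i // i ∉ F} => q i) (z := fun i => z i) hYc ⟨_, hc⟩
        (fun i => hq i) htail_q (fun i => hz i) ((F.hasSum_iff_compl).1 hS)
    have ht : 0 ≤ 1 - s := htail_q.nonneg fun i => hq _
    have hS_eq : S = s • F.centerMass q z + (1 - s) • u := by
      rw [Finset.centerMass, smul_inv_smul₀ hs.ne', htail]
      abel
    have hjensen : s * f (F.centerMass q z) ≤ ∑ i ∈ F, q i * f (z i) := by
      have := hf.map_centerMass_le (fun i _ => hq i) hs (fun i _ => hz i)
      simp only [Finset.centerMass, Function.comp_def, smul_eq_mul] at this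
      rwa [le_inv_mul_iff₀ hs] at this
    calc f S ≤ s * f (F.centerMass q z) + (1 - s) * f u := by
          rw [hS_eq]; exact hf.2 hc hu hs.le ht (by ring)
      _ ≤ ∑ i ∈ F, q i * f (z i) + (1 - s) * b := by
          gcongr
          exact hfb u hu
  have hlim : Tendsto (fun F : Finset ι => ∑ i ∈ F, q i * f (z i) + (1 - ∑ i ∈ F, q i) * b)
      atTop (𝓝 (A + (1 - 1) * b)) := Tendsto.add hA ((tendsto_const_nhds.sub hq1).mul_const b)
  simpa using ge_of_tendsto hlim hsplit

theorem ConvexOn.map_tsum_le_of_isCompact {E : Type*} [NormedAddCommGroup E] [NormedSpace ℝ E]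
    [CompleteSpace E] {Y : Set E} {f : E → ℝ} (hf : ConvexOn ℝ Y f) (hY : IsCompact Y)
    {a b : ℝ} (hfab : ∀ u ∈ Y, f u ∈ Set.Icc a b) {q : ι → ℝ} (hq : ∀ i, 0 ≤ q i)
    (hq1 : HasSum q 1) {z : ι → E} (hz : ∀ i, z i ∈ Y) :
    f (∑' i, q i • z i) ≤ ∑' i, q i * f (z i) := by
  obtain ⟨M, hM⟩ := isBounded_iff_forall_norm_le.1 hY.isBounded
  have hzsum : Summable fun i => q i • z i :=
    .of_norm_bounded (hq1.summable.mul_right M) fun i => by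
      rw [norm_smul, Real.norm_of_nonneg (hq i)]
      exact mul_le_mul_of_nonneg_left (hM _ (hz i)) (hq i)
  have hfsum : Summable fun i => q i * f (z i) :=
    .of_norm_bounded (hq1.summable.mul_right (max |a| |b|)) fun i => by
      rw [norm_mul, Real.norm_of_nonneg (hq i), Real.norm_eq_abs]
      exact mul_le_mul_of_nonneg_left
        (abs_le_max_abs_abs (hfab _ (hz i)).1 (hfab _ (hz i)).2) (hq i)
  exact hf.map_hasSum_le hY.isClosed (fun u hu => (hfab u hu).2) hq hq1 hz hzsum.hasSum
    hfsum.hasSum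

end InfiniteJensen

section RealInequalities

open Real

variable {ι : Type*}

lemma exp_neg_le_one_sub_add_sq {v : ℝ} (hv : 0 ≤ v) : exp (-v) ≤ 1 - v + v ^ 2 := by
  have h1 : 0 < 1 + v := by linarith
  calc exp (-v) = (exp v)⁻¹ := exp_neg v
    _ ≤ (1 + v)⁻¹ := inv_anti₀ h1 (by linarith [add_one_le_exp v])
    _ ≤ 1 - v + v ^ 2 := by
        rw [inv_le_iff_one_le_mul₀' h1]
        nlinarith [pow_nonneg hv 3]

lemma tsum_mul_exp_neg_le {Q g : ι → ℝ} (hQ : ∀ i, 0 ≤ Q i) (hQ1 : HasSum Q 1)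
    {B t : ℝ} (hg0 : ∀ i, 0 ≤ g i) (hgB : ∀ i, g i ≤ B) (ht : 0 ≤ t) :
    ∑' i, Q i * exp (-(t * g i)) ≤ exp (-(t * ∑' i, Q i * g i) + t ^ 2 * B ^ 2) := by
  have hQg : Summable fun i => Q i * g i :=
    (hQ1.summable.mul_right B).of_nonneg_of_le (fun i => mul_nonneg (hQ i) (hg0 i))
      fun i => mul_le_mul_of_nonneg_left (hgB i) (hQ i)
  have hQe : Summable fun i => Q i * exp (-(t * g i)) :=
    hQ1.summable.of_nonneg_of_le (fun i => mul_nonneg (hQ i) (exp_pos _).le) fun i =>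
      mul_le_of_le_one_right (hQ i) (exp_le_one_iff.2 (by nlinarith [hg0 i]))
  have hquad : HasSum (fun i => Q i * (1 + t ^ 2 * B ^ 2) - t * (Q i * g i))
      (1 * (1 + t ^ 2 * B ^ 2) - t * ∑' i, Q i * g i) :=
    (hQ1.mul_right _).sub (hQg.hasSum.mul_left t)
  calc ∑' i, Q i * exp (-(t * g i))
      ≤ 1 * (1 + t ^ 2 * B ^ 2) - t * ∑' i, Q i * g i := by
        refine hasSum_le (fun i => ?_) hQe.hasSum hquad
        have hv : 0 ≤ t * g i := mul_nonneg ht (hg0 i)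
        have hvB : (t * g i) ^ 2 ≤ t ^ 2 * B ^ 2 := by
          rw [← mul_pow]; exact pow_le_pow_left₀ hv (by nlinarith [hgB i]) 2
        nlinarith [exp_neg_le_one_sub_add_sq hv, hQ i]
    _ ≤ exp (-(t * ∑' i, Q i * g i) + t ^ 2 * B ^ 2) := by
        linarith [add_one_le_exp (-(t * ∑' i, Q i * g i) + t ^ 2 * B ^ 2)]

lemma tsum_mul_rpow_le {α u : ι → ℝ} (hα : ∀ i, 0 ≤ α i) (hα1 : HasSum α 1)
    (hu0 : ∀ i, 0 ≤ u i) (hu1 : ∀ i, u i ≤ 1) {θ : ℝ} (hθ0 : 0 ≤ θ) (hθ1 : θ ≤ 1) :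
    ∑' i, α i * u i ^ θ ≤ (∑' i, α i * u i) ^ θ := by
  have hconv : ConvexOn ℝ (Set.Icc 0 1) fun x : ℝ => -x ^ θ :=
    (Real.concaveOn_rpow hθ0 hθ1).neg.subset Set.Icc_subset_Ici_self (convex_Icc 0 1)
  have hsum : ∀ {v : ι → ℝ}, (∀ i, 0 ≤ v i) → (∀ i, v i ≤ 1) → Summable fun i => α i * v i :=
    fun hv0 hv1 => hα1.summable.of_nonneg_of_le (fun i => mul_nonneg (hα i) (hv0 i))
      fun i => mul_le_of_le_one_right (hα i) (hv1 i)
  have hjensen := hconv.map_hasSum_le isClosed_Icc (b := 0)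
    (fun x hx => neg_nonpos.2 (rpow_nonneg hx.1 θ)) hα hα1 (fun i => ⟨hu0 i, hu1 i⟩)
    (hsum hu0 hu1).hasSum
    (by simpa only [mul_neg] using
      (hsum (fun i => rpow_nonneg (hu0 i) θ) fun i => rpow_le_one (hu0 i) (hu1 i) hθ0).hasSum.neg)
  exact neg_le_neg_iff.1 hjensen

end RealInequalities

section MixLoss

open Real

variable {ι : Type*}

noncomputable def expWeightSum (α L : ι → ℝ) (η : ℝ) : ℝ :=
  ∑' i, α i * exp (-(η * L i))

noncomputable def expWeights (α L : ι → ℝ) (η : ℝ) (i : ι) : ℝ :=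
  α i * exp (-(η * L i)) / expWeightSum α L η

noncomputable def mixLoss (α L : ι → ℝ) (η : ℝ) : ℝ :=
  -η⁻¹ * log (expWeightSum α L η)

variable {α L : ι → ℝ} {η : ℝ}

lemma summable_mul_exp_neg (hα : ∀ i, 0 < α i) (hα1 : HasSum α 1) (hL : ∀ i, 0 ≤ L i)
    (hη : 0 ≤ η) : Summable fun i => α i * exp (-(η * L i)) :=
  hα1.summable.of_nonneg_of_le (fun i => (mul_pos (hα i) (exp_pos _)).le) fun i =>
    mul_le_of_le_one_right (hα i).le (exp_le_one_iff.2 (neg_nonpos.2 (mul_nonneg hη (hL i))))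

lemma expWeightSum_pos (hα : ∀ i, 0 < α i) (hα1 : HasSum α 1) (hL : ∀ i, 0 ≤ L i)
    (hη : 0 ≤ η) : 0 < expWeightSum α L η := by
  obtain ⟨i⟩ : Nonempty ι := by
    by_contra h
    rw [not_nonempty_iff] at h
    exact one_ne_zero (hα1.unique hasSum_empty)
  exact (summable_mul_exp_neg hα hα1 hL hη).tsum_pos (fun j => (mul_pos (hα j) (exp_pos _)).le)
    i (mul_pos (hα i) (exp_pos _))

lemma expWeights_nonneg (hα : ∀ i, 0 < α i) (i : ι) : 0 ≤ expWeights α L η i :=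
  div_nonneg (mul_pos (hα i) (exp_pos _)).le
    (tsum_nonneg fun j => (mul_pos (hα j) (exp_pos _)).le)

lemma hasSum_expWeights (hα : ∀ i, 0 < α i) (hα1 : HasSum α 1) (hL : ∀ i, 0 ≤ L i)
    (hη : 0 ≤ η) : HasSum (expWeights α L η) 1 := by
  have := (summable_mul_exp_neg hα hα1 hL hη).hasSum.div_const (expWeightSum α L η)
  rwa [← expWeightSum, div_self (expWeightSum_pos hα hα1 hL hη).ne'] at this

lemma mixLoss_le_sub_log (hα : ∀ i, 0 < α i) (hα1 : HasSum α 1) (hL : ∀ i, 0 ≤ L i)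
    (hη : 0 < η) (i : ι) : mixLoss α L η ≤ L i - η⁻¹ * log (α i) := by
  have hterm : α i * exp (-(η * L i)) ≤ expWeightSum α L η :=
    (summable_mul_exp_neg hα hα1 hL hη.le).le_tsum i fun j _ => (mul_pos (hα j) (exp_pos _)).le
  have hlog : log (α i) - η * L i ≤ log (expWeightSum α L η) := by
    have := log_le_log (mul_pos (hα i) (exp_pos _)) hterm
    rwa [log_mul (hα i).ne' (exp_pos _).ne', log_exp, ← sub_eq_add_neg] at this
  have := mul_le_mul_of_nonneg_left hlog (inv_nonneg.2 hη.le)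
  rw [mul_sub, ← mul_assoc, inv_mul_cancel₀ hη.ne', one_mul] at this
  unfold mixLoss
  linarith

lemma mixLoss_le_mixLoss_of_le (hα : ∀ i, 0 < α i) (hα1 : HasSum α 1) (hL : ∀ i, 0 ≤ L i)
    {η' : ℝ} (hη' : 0 < η') (hη'η : η' ≤ η) : mixLoss α L η ≤ mixLoss α L η' := by
  have hη : 0 < η := hη'.trans_le hη'η
  have hpow : expWeightSum α L η' ≤ expWeightSum α L η ^ (η' / η) := by
    have := tsum_mul_rpow_le (fun i => (hα i).le) hα1 (fun i => (exp_pos (-(η * L i))).le)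
      (fun i => exp_le_one_iff.2 (neg_nonpos.2 (mul_nonneg hη.le (hL i))))
      (div_pos hη' hη).le ((div_le_one hη).2 hη'η)
    convert this using 2
    · unfold expWeightSum
      refine tsum_congr fun i => ?_
      rw [← exp_mul]
      field_simp
    · rfl
  have hW := expWeightSum_pos hα hα1 hL hη.le
  have hlog : log (expWeightSum α L η') ≤ η' / η * log (expWeightSum α L η) := by
    rw [← log_rpow hW]
    exact log_le_log (expWeightSum_pos hα hα1 hL hη'.le) hpow
  have := mul_le_mul_of_nonneg_left hlog (inv_nonneg.2 hη'.le)
  rw [← mul_assoc, div_eq_mul_inv, ← mul_assoc, inv_mul_cancel₀ hη'.ne', one_mul] at this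
  unfold mixLoss
  linarith

lemma expWeightSum_add (hα : ∀ i, 0 < α i) (hα1 : HasSum α 1) (hL : ∀ i, 0 ≤ L i)
    (hη : 0 ≤ η) (g : ι → ℝ) :
    expWeightSum α (L + g) η
      = expWeightSum α L η * ∑' i, expWeights α L η i * exp (-(η * g i)) := by
  rw [← tsum_mul_left, expWeightSum]
  refine tsum_congr fun i => ?_
  rw [expWeights, div_mul_eq_mul_div, mul_div_cancel₀ _ (expWeightSum_pos hα hα1 hL hη).ne',
    Pi.add_apply, mul_add, neg_add, exp_add, mul_assoc]

lemma tsum_expWeights_mul_le (hα : ∀ i, 0 < α i) (hα1 : HasSum α 1) (hL : ∀ i, 0 ≤ L i)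
    (hη : 0 < η) {g : ι → ℝ} {B : ℝ} (hg0 : ∀ i, 0 ≤ g i) (hgB : ∀ i, g i ≤ B) :
    ∑' i, expWeights α L η i * g i ≤ mixLoss α (L + g) η - mixLoss α L η + η * B ^ 2 := by
  set E := ∑' i, expWeights α L η i * g i
  have hmoment := tsum_mul_exp_neg_le (expWeights_nonneg hα) (hasSum_expWeights hα hα1 hL hη.le)
    hg0 hgB hη.le
  have hW := expWeightSum_pos hα hα1 hL hη.le
  have hM : 0 < ∑' i, expWeights α L η i * exp (-(η * g i)) :=
    pos_of_mul_pos_right (expWeightSum_add hα hα1 hL hη.le g ▸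
      expWeightSum_pos hα hα1 (fun i => add_nonneg (hL i) (hg0 i)) hη.le) hW.le
  have hlog : log (expWeightSum α (L + g) η) - log (expWeightSum α L η)
      ≤ -(η * E) + η ^ 2 * B ^ 2 := by
    rw [expWeightSum_add hα hα1 hL hη.le, log_mul hW.ne' hM.ne', add_sub_cancel_left]
    exact (log_le_log hM hmoment).trans_eq (log_exp _)
  have := mul_le_mul_of_nonneg_left hlog (inv_nonneg.2 hη.le)
  unfold mixLoss
  have hηE : η⁻¹ * (-(η * E) + η ^ 2 * B ^ 2) = -E + η * B ^ 2 := by field_simp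
  rw [hηE] at this
  linarith

lemma mixLoss_zero (hα1 : HasSum α 1) (η : ℝ) : mixLoss α 0 η = 0 := by
  simp [mixLoss, expWeightSum, hα1.tsum_eq]

end MixLoss

section WeakAggregatingAlgorithm

open Real

variable {ι : Type*}

def cumLoss (g : ℕ → ι → ℝ) (n : ℕ) (i : ι) : ℝ := ∑ k ∈ Finset.range n, g k i

lemma cumLoss_zero (g : ℕ → ι → ℝ) : cumLoss g 0 = 0 := by
  ext; simp [cumLoss]

lemma cumLoss_succ (g : ℕ → ι → ℝ) (n : ℕ) : cumLoss g (n + 1) = cumLoss g n + g n := by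
  ext; simp [cumLoss, Finset.sum_range_succ]

lemma cumLoss_nonneg {g : ℕ → ι → ℝ} (hg : ∀ n i, 0 ≤ g n i) (n : ℕ) (i : ι) :
    0 ≤ cumLoss g n i :=
  Finset.sum_nonneg fun k _ => hg k i

/-- At `n = 0` the rate is `1` rather than `1/√0`; the round-`0` weights do not depend on it. -/
noncomputable def waaRate (n : ℕ) : ℝ := (√(max (n : ℝ) 1))⁻¹

lemma waaRate_pos (n : ℕ) : 0 < waaRate n :=
  inv_pos.2 (sqrt_pos.2 (lt_max_of_lt_right one_pos))

lemma waaRate_succ_le (n : ℕ) : waaRate (n + 1) ≤ waaRate n := by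
  unfold waaRate
  gcongr
  exact n.le_succ

lemma waaRate_of_pos {n : ℕ} (hn : 1 ≤ n) : waaRate n = (√n)⁻¹ := by
  rw [waaRate, max_eq_left (by exact_mod_cast hn)]

lemma sum_range_waaRate_le (N : ℕ) : ∑ n ∈ Finset.range N, waaRate n ≤ 3 * √N := by
  have hstep : ∀ n : ℕ, waaRate n ≤ 3 * √(n + 1 : ℕ) - 3 * √n := by
    intro n
    rcases Nat.eq_zero_or_pos n with rfl | hn
    · norm_num [waaRate]
    have hs : 1 ≤ √n := one_le_sqrt.2 (by exact_mod_cast hn)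
    have hsq : √(n + 1 : ℕ) ^ 2 = √n ^ 2 + 1 := by
      rw [sq_sqrt (by positivity), sq_sqrt (by positivity)]; push_cast; ring
    have hr := sqrt_nonneg (n + 1 : ℕ)
    have hsr : √n ≤ √(n + 1 : ℕ) := by nlinarith
    have hr2 : √(n + 1 : ℕ) ≤ 2 * √n := by nlinarith
    rw [waaRate_of_pos hn, inv_le_iff_one_le_mul₀ (by positivity)]
    nlinarith [mul_nonneg (sub_nonneg.2 hsr) (sub_nonneg.2 hr2)]
  calc ∑ n ∈ Finset.range N, waaRate n
      ≤ ∑ n ∈ Finset.range N, (3 * √(n + 1 : ℕ) - 3 * √n) :=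
        Finset.sum_le_sum fun n _ => hstep n
    _ = 3 * √N := by rw [Finset.sum_range_sub (fun n => 3 * √n)]; simp

lemma mul_exp_div_tsum_eq_expWeights (α : ι → ℝ) (ℓ : ℕ → ι → ℝ) (a : ℝ) (n : ℕ) (p : ι) :
    α p * exp (-(∑ i ∈ Finset.range n, ℓ i p) / √n)
        / ∑' p', α p' * exp (-(∑ i ∈ Finset.range n, ℓ i p') / √n)
      = expWeights α (cumLoss (fun i p => ℓ i p - a) n) (waaRate n) p := by
  -- shifting the losses by `a` multiplies every weight by the same factor `exp (-n a / √n)`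
  have hshift : ∀ p, α p * exp (-(∑ i ∈ Finset.range n, ℓ i p) / √n)
      = α p * exp (-(waaRate n * cumLoss (fun i p => ℓ i p - a) n p)) * exp (-(n * a) / √n) := by
    intro p
    rcases Nat.eq_zero_or_pos n with rfl | hn
    · simp [cumLoss_zero]
    rw [mul_assoc, ← exp_add, waaRate_of_pos hn]
    simp only [cumLoss, Finset.sum_sub_distrib, Finset.sum_const, Finset.card_range, nsmul_eq_mul]
    congr 2
    field_simp
    ring
  simp only [hshift, tsum_mul_right, expWeights, expWeightSum]
  exact mul_div_mul_right _ _ (exp_pos _).ne'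

theorem sum_range_le_cumLoss_add_of_le_tsum_expWeights {α : ι → ℝ} (hα : ∀ i, 0 < α i)
    (hα1 : HasSum α 1) {g : ℕ → ι → ℝ} {B : ℝ} (hg0 : ∀ n i, 0 ≤ g n i)
    (hgB : ∀ n i, g n i ≤ B) {ℓ : ℕ → ℝ}
    (hℓ : ∀ n, ℓ n ≤ ∑' i, expWeights α (cumLoss g n) (waaRate n) i * g n i)
    {N : ℕ} (hN : 1 ≤ N) (i : ι) :
    ∑ n ∈ Finset.range N, ℓ n ≤ cumLoss g N i + (3 * B ^ 2 - log (α i)) * √N := by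
  set φ : ℕ → ℝ := fun n => mixLoss α (cumLoss g n) (waaRate n)
  have hround : ∀ n, ℓ n ≤ φ (n + 1) - φ n + waaRate n * B ^ 2 := fun n =>
    calc ℓ n ≤ ∑' i, expWeights α (cumLoss g n) (waaRate n) i * g n i := hℓ n
      _ ≤ mixLoss α (cumLoss g n + g n) (waaRate n) - φ n + waaRate n * B ^ 2 :=
          tsum_expWeights_mul_le hα hα1 (cumLoss_nonneg hg0 n) (waaRate_pos n) (hg0 n) (hgB n)
      _ ≤ φ (n + 1) - φ n + waaRate n * B ^ 2 := by
          rw [← cumLoss_succ]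
          gcongr
          exact mixLoss_le_mixLoss_of_le hα hα1 (cumLoss_nonneg hg0 _) (waaRate_pos _) (waaRate_succ_le n)
  have hφ0 : φ 0 = 0 := by simp only [φ, cumLoss_zero, mixLoss_zero hα1]
  have hφN : φ N ≤ cumLoss g N i - √N * log (α i) := by
    have := mixLoss_le_sub_log hα hα1 (cumLoss_nonneg hg0 N) (waaRate_pos N) i
    rw [waaRate_of_pos hN, inv_inv] at this
    simpa only [φ, waaRate_of_pos hN] using this
  calc ∑ n ∈ Finset.range N, ℓ n
      ≤ ∑ n ∈ Finset.range N, (φ (n + 1) - φ n + waaRate n * B ^ 2) :=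
        Finset.sum_le_sum fun n _ => hround n
    _ = φ N + B ^ 2 * ∑ n ∈ Finset.range N, waaRate n := by
        rw [Finset.sum_add_distrib, Finset.sum_range_sub, hφ0, ← Finset.sum_mul]; ring
    _ ≤ cumLoss g N i - √N * log (α i) + B ^ 2 * (3 * √N) := by
        gcongr
        exact sum_range_waaRate_le N
    _ = cumLoss g N i + (3 * B ^ 2 - log (α i)) * √N := by ring

end WeakAggregatingAlgorithm

theorem stmt16_general {m : ℕ} {Λ X : Type*}
    (Y : Set (EuclideanSpace ℝ (Fin m))) (hYc : IsCompact Y)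
    (l : EuclideanSpace ℝ (Fin m) → Λ → X → ℝ)
    (a b : ℝ) (hbdd : ∀ y ∈ Y, ∀ (lam : Λ) (x : X), l y lam x ∈ Set.Icc a b)
    (hconv : ∀ (lam : Λ) (x : X), ConvexOn ℝ Y fun y => l y lam x)
    (α : ℕ × ℕ → ℝ) (hαpos : ∀ p, 0 < α p) (hαsum : HasSum α 1)
    (yE : ℕ × ℕ → ℕ → EuclideanSpace ℝ (Fin m)) (hyE : ∀ p i, yE p i ∈ Y)
    (lam : ℕ → Λ) (x : ℕ → X)
    (w : ℕ → ℕ × ℕ → ℝ)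
    (hw : ∀ n p, w n p = α p * Real.exp
      (-(∑ i ∈ Finset.range n, l (yE p i) (lam i) (x i)) / Real.sqrt n))
    (y : ℕ → EuclideanSpace ℝ (Fin m))
    (hy : ∀ n, y n = ∑' p : ℕ × ℕ, (w n p / ∑' p' : ℕ × ℕ, w n p') • yE p n) :
    ∀ p : ℕ × ℕ, ∃ C : ℝ, ∀ N : ℕ, 1 ≤ N →
      (1 / (N : ℝ)) * ∑ i ∈ Finset.range N, l (y i) (lam i) (x i)
        ≤ (1 / (N : ℝ)) * ∑ i ∈ Finset.range N, l (yE p i) (lam i) (x i)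
          + C / Real.sqrt N := by
  have hshifted : ∀ u ∈ Y, ∀ lam x, l u lam x - a ∈ Set.Icc 0 (b - a) := fun u hu lam x =>
    ⟨sub_nonneg.2 (hbdd u hu lam x).1, sub_le_sub_right (hbdd u hu lam x).2 a⟩
  set g : ℕ → ℕ × ℕ → ℝ := fun n p => l (yE p n) (lam n) (x n) - a
  have hg : ∀ n p, g n p ∈ Set.Icc 0 (b - a) := fun n p => hshifted _ (hyE p n) _ _
  have hround : ∀ n, l (y n) (lam n) (x n) - a
      ≤ ∑' p, expWeights α (cumLoss g n) (waaRate n) p * g n p := by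
    intro n
    rw [hy n]
    simp only [hw, mul_exp_div_tsum_eq_expWeights α (fun i p => l (yE p i) (lam i) (x i)) a n]
    refine ConvexOn.map_tsum_le_of_isCompact ?_ hYc (fun u hu => hshifted u hu _ _)
      (expWeights_nonneg hαpos) (hasSum_expWeights hαpos hαsum
        (cumLoss_nonneg (fun n p => (hg n p).1) n) (waaRate_pos n).le) (fun p => hyE p n)
    simpa only [sub_eq_add_neg, Pi.add_def] using (hconv (lam n) (x n)).add_const (-a)
  intro p
  refine ⟨3 * (b - a) ^ 2 - Real.log (α p), fun N hN => ?_⟩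
  have hregret := sum_range_le_cumLoss_add_of_le_tsum_expWeights hαpos hαsum
    (fun n p => (hg n p).1) (fun n p => (hg n p).2) hround hN p
  simp only [cumLoss, g, Finset.sum_sub_distrib, Finset.sum_const, Finset.card_range,
    nsmul_eq_mul] at hregret
  calc (1 / (N : ℝ)) * ∑ i ∈ Finset.range N, l (y i) (lam i) (x i)
      ≤ (1 / (N : ℝ)) * (∑ i ∈ Finset.range N, l (yE p i) (lam i) (x i)
          + (3 * (b - a) ^ 2 - Real.log (α p)) * √N) := by
        gcongr
        linarith
    _ = _ := by
        rw [mul_add]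
        congr 1
        nth_rewrite 1 [← Real.mul_self_sqrt (Nat.cast_nonneg N)]
        field_simp

/-- The Weak Aggregating Algorithm regret bound, as used in MHA: the learner playing the
exponentially-weighted average (learning rate `1/√n`) of countably many experts suffers
average loss at most that of any expert `(k,h)` plus `C_{k,h}/√N`, where `C_{k,h}` depends
only on the loss bound and the prior weight `α_{k,h}`. -/
theorem stmt16 {m : ℕ} {Λ X : Type*}
    (Y : Set (EuclideanSpace ℝ (Fin m))) (hYc : IsCompact Y) (hYconv : Convex ℝ Y)
    (hYne : Y.Nonempty)
    (l : EuclideanSpace ℝ (Fin m) → Λ → X → ℝ)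
    (a b : ℝ) (hbdd : ∀ y ∈ Y, ∀ (lam : Λ) (x : X), l y lam x ∈ Set.Icc a b)
    (hconv : ∀ (lam : Λ) (x : X), ConvexOn ℝ Y fun y => l y lam x)
    (α : ℕ × ℕ → ℝ) (hαpos : ∀ p, 0 < α p) (hαsum : HasSum α 1)
    (yE : ℕ × ℕ → ℕ → EuclideanSpace ℝ (Fin m)) (hyE : ∀ p i, yE p i ∈ Y)
    (lam : ℕ → Λ) (x : ℕ → X)
    (w : ℕ → ℕ × ℕ → ℝ)
    (hw : ∀ n p, w n p = α p * Real.exp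
      (-(∑ i ∈ Finset.range n, l (yE p i) (lam i) (x i)) / Real.sqrt n))
    (y : ℕ → EuclideanSpace ℝ (Fin m))
    (hy : ∀ n, y n = ∑' p : ℕ × ℕ, (w n p / ∑' p' : ℕ × ℕ, w n p') • yE p n) :
    ∀ p : ℕ × ℕ, ∃ C : ℝ, ∀ N : ℕ, 1 ≤ N →
      (1 / (N : ℝ)) * ∑ i ∈ Finset.range N, l (y i) (lam i) (x i)
        ≤ (1 / (N : ℝ)) * ∑ i ∈ Finset.range N, l (yE p i) (lam i) (x i)
          + C / Real.sqrt N :=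
  stmt16_general Y hYc l a b hbdd hconv α hαpos hαsum yE hyE lam x w hw y hy
end
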